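/- arXiv:1707.00421 — 3 statements merged into one kernel-verified Lean document; each statement's English description precedes it below -/
import Mathlib

section
/- Let C be a nonzero linear code of length n and dimension k over a field F, with coordinate set E = [n]. Then C has minimum Hamming distance d = n − k + 1 (i.e., C is an (n,k,n−k+1)-MDS code) if and only if the matroid M_C is the uniform matroid U_n^k, that is, if and only if dim(C|X) = min{|X|, k} for every subset X ⊆ E. -/
open Finset Module

namespace Stmt2Aux

variable {F : Type} [Field F] [DecidableEq F] {n : ℕ}

/-- The restriction (puncturing) map to coordinates in `X`. -/
noncomputable abbrev res (F : Type) [Field F] {n : ℕ} (X : Finset (Fin n)) :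
    (Fin n → F) →ₗ[F] ({x // x ∈ X} → F) :=
  LinearMap.funLeft F F (fun a : {x // x ∈ X} => (a : Fin n))

lemma rank_eq (C : Submodule F (Fin n → F)) (X : Finset (Fin n)) :
    Module.finrank F (C.map (res F X)) +
      Module.finrank F (LinearMap.ker ((res F X).domRestrict C)) = Module.finrank F C := by
  rw [← LinearMap.range_domRestrict]
  exact LinearMap.finrank_range_add_finrank_ker _

lemma mem_ker_iff (C : Submodule F (Fin n → F)) (X : Finset (Fin n)) (c : C) :
    c ∈ LinearMap.ker ((res F X).domRestrict C) ↔ ∀ x ∈ X, (c : Fin n → F) x = 0 := by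
  simp only [LinearMap.mem_ker, LinearMap.domRestrict_apply]
  constructor
  · intro h x hx
    exact congrFun h ⟨x, hx⟩
  · intro h
    funext a
    exact h a a.2

lemma norm_le (c : Fin n → F) (X : Finset (Fin n)) (h : ∀ x ∈ X, c x = 0) :
    hammingNorm c ≤ n - X.card := by
  have hsub : ({i | c i ≠ 0} : Finset (Fin n)) ⊆ Xᶜ := by
    intro i hi
    simp only [Finset.mem_filter] at hi
    simp only [Finset.mem_compl]
    intro hiX
    exact hi.2 (h i hiX)
  calc hammingNorm c ≤ Xᶜ.card := Finset.card_le_card hsub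
    _ = n - X.card := by rw [Finset.card_compl, Fintype.card_fin]

lemma finrank_pi_subtype (X : Finset (Fin n)) :
    Module.finrank F ({x // x ∈ X} → F) = X.card := by
  rw [Module.finrank_pi, Fintype.card_coe]

lemma finrank_map_le_card (C : Submodule F (Fin n → F)) (X : Finset (Fin n)) :
    Module.finrank F (C.map (res F X)) ≤ X.card := by
  rw [← finrank_pi_subtype (F := F) X]
  exact Submodule.finrank_le _

lemma map_subset_eq (C : Submodule F (Fin n → F)) {X Y : Finset (Fin n)} (hXY : X ⊆ Y) :
    C.map (res F X) =
      (C.map (res F Y)).map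
        (LinearMap.funLeft F F
          (fun a : {x // x ∈ X} => (⟨(a : Fin n), hXY a.2⟩ : {x // x ∈ Y}))) := by
  rw [← Submodule.map_comp, ← LinearMap.funLeft_comp]
  rfl

lemma map_mono_card {C : Submodule F (Fin n → F)} {X Y : Finset (Fin n)} (hXY : X ⊆ Y) :
    Module.finrank F (C.map (res F Y)) ≤ Module.finrank F (C.map (res F X)) →
    Module.finrank F (C.map (res F X)) = Module.finrank F (C.map (res F Y)) := by
  intro h
  refine le_antisymm ?_ h
  rw [map_subset_eq C hXY]
  exact Submodule.finrank_map_le _ _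

lemma finrank_map_mono {C : Submodule F (Fin n → F)} {X Y : Finset (Fin n)} (hXY : X ⊆ Y) :
    Module.finrank F (C.map (res F X)) ≤ Module.finrank F (C.map (res F Y)) := by
  rw [map_subset_eq C hXY]
  exact Submodule.finrank_map_le _ _

lemma map_top_of_subset {C : Submodule F (Fin n → F)} {X Y : Finset (Fin n)} (hXY : X ⊆ Y)
    (hY : C.map (res F Y) = ⊤) : C.map (res F X) = ⊤ := by
  rw [map_subset_eq C hXY, hY, Submodule.map_top]
  have hinj : Function.Injective
      (fun a : {x // x ∈ X} => (⟨(a : Fin n), hXY a.2⟩ : {x // x ∈ Y})) := by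
    intro a b hab
    apply Subtype.ext
    simpa using congrArg Subtype.val hab
  exact LinearMap.range_eq_top.mpr (LinearMap.funLeft_surjective_of_injective _ _ _ hinj)

end Stmt2Aux

open Stmt2Aux

/-- A nonzero linear code `C ⊆ F^n` of dimension `k` has minimum Hamming
distance `n - k + 1` (i.e. it is an `(n,k,n-k+1)`-MDS code) if and only if the matroid
`M_C` is the uniform matroid `U_n^k`, i.e. `dim (C|X) = min {|X|, k}` for every `X ⊆ [n]`. -/
theorem stmt_2 {F : Type} [Field F] [DecidableEq F] {n k : ℕ}
    (C : Submodule F (Fin n → F)) (hC : C ≠ ⊥) (hk : Module.finrank F C = k) :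
    sInf {w : ℕ | ∃ c ∈ C, c ≠ 0 ∧ hammingNorm c = w} = n - k + 1 ↔
    ∀ X : Finset (Fin n),
      Module.finrank F
          (C.map (LinearMap.funLeft F F (fun a : {x // x ∈ X} => (a : Fin n)))) =
        min X.card k := by
  have hkn : k ≤ n := by
    have h1 : Module.finrank F (Fin n → F) = n := by
      rw [Module.finrank_pi, Fintype.card_fin]
    have h2 := Submodule.finrank_le C
    omega
  have hk0 : 0 < k := by
    have : Module.finrank F ↥C ≠ 0 := fun h0 => hC (Submodule.finrank_eq_zero.mp h0)
    omega
  -- nonemptiness of the weight set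
  obtain ⟨c₀, hc₀C, hc₀⟩ := Submodule.exists_mem_ne_zero_of_ne_bot hC
  have hSne : {w : ℕ | ∃ c ∈ C, c ≠ 0 ∧ hammingNorm c = w}.Nonempty :=
    ⟨hammingNorm c₀, c₀, hc₀C, hc₀, rfl⟩
  have hiff : (∀ X : Finset (Fin n),
      Module.finrank F
          (C.map (LinearMap.funLeft F F (fun a : {x // x ∈ X} => (a : Fin n)))) =
        min X.card k) ↔ (∀ X : Finset (Fin n),
      Module.finrank F (C.map (res F X)) = min X.card k) := Iff.rfl
  rw [hiff]
  constructor
  · -- MDS → uniform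
    intro hd
    -- step 1: every X of card k gives the full space
    have step1 : ∀ X : Finset (Fin n), X.card = k → C.map (res F X) = ⊤ := by
      intro X hX
      have hker : LinearMap.ker ((res F X).domRestrict C) = ⊥ := by
        by_contra hne
        obtain ⟨c, hcker, hcne⟩ := Submodule.exists_mem_ne_zero_of_ne_bot hne
        have hcz : ∀ x ∈ X, (c : Fin n → F) x = 0 := (mem_ker_iff C X c).mp hcker
        have hwle : hammingNorm (c : Fin n → F) ≤ n - k := by
          have := norm_le (c : Fin n → F) X hcz
          rwa [hX] at this
        have hcv : (c : Fin n → F) ≠ 0 := fun h => hcne (Subtype.ext h)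
        have hmem : hammingNorm (c : Fin n → F) ∈
            {w : ℕ | ∃ c ∈ C, c ≠ 0 ∧ hammingNorm c = w} := ⟨c, c.2, hcv, rfl⟩
        have := Nat.sInf_le hmem
        omega
      have := rank_eq C X
      rw [hker, finrank_bot, hk] at this
      apply Submodule.eq_top_of_finrank_eq
      rw [finrank_pi_subtype, hX]
      omega
    intro X
    show Module.finrank F (C.map (res F X)) = min X.card k
    rcases le_or_gt k X.card with hXk | hXk
    · -- |X| ≥ k
      obtain ⟨Y, hYX, hY⟩ := Finset.exists_subset_card_eq hXk
      have h1 : Module.finrank F (C.map (res F Y)) = k := by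
        rw [step1 Y hY, finrank_top, finrank_pi_subtype, hY]
      have h2 : k ≤ Module.finrank F (C.map (res F X)) := by
        rw [← h1]; exact finrank_map_mono hYX
      have h3 : Module.finrank F (C.map (res F X)) ≤ k := by
        rw [← hk]; exact Submodule.finrank_map_le _ _
      omega
    · -- |X| < k
      obtain ⟨Y, hXY, hY⟩ := Finset.exists_superset_card_eq hXk.le
        (by rw [Fintype.card_fin]; exact hkn)
      have : C.map (res F X) = ⊤ := map_top_of_subset hXY (step1 Y hY)
      rw [this, finrank_top, finrank_pi_subtype]
      omega
  · -- uniform → MDS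
    intro h
    have hlb : ∀ w ∈ {w : ℕ | ∃ c ∈ C, c ≠ 0 ∧ hammingNorm c = w}, n - k + 1 ≤ w := by
      rintro w ⟨c, hcC, hcne, rfl⟩
      by_contra hlt
      push_neg at hlt
      have hwn : hammingNorm c ≤ n := by
        simpa [hammingNorm] using
          (Finset.card_le_univ ({i | c i ≠ 0} : Finset (Fin n)))
      set X : Finset (Fin n) := ({i | c i ≠ 0} : Finset (Fin n))ᶜ with hXdef
      have hXcard : X.card = n - hammingNorm c := by
        rw [hXdef, Finset.card_compl, Fintype.card_fin]; rfl
      have hX : Module.finrank F (C.map (res F X)) = k := by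
        rw [h X, hXcard, min_eq_right]
        omega
      have hkerne : LinearMap.ker ((res F X).domRestrict C) ≠ ⊥ := by
        rw [Submodule.ne_bot_iff]
        refine ⟨⟨c, hcC⟩, ?_, ?_⟩
        · rw [mem_ker_iff]
          intro x hx
          simp only [hXdef, Finset.mem_compl, Finset.mem_filter, Finset.mem_univ,
            true_and, not_not] at hx
          exact hx
        · exact fun hcontra => hcne (congrArg Subtype.val hcontra)
      have := rank_eq C X
      rw [hX, hk] at this
      have : Module.finrank F (LinearMap.ker ((res F X).domRestrict C)) = 0 := by omega
      exact hkerne (Submodule.finrank_eq_zero.mp this)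
    have hub : ∃ w ∈ {w : ℕ | ∃ c ∈ C, c ≠ 0 ∧ hammingNorm c = w}, w ≤ n - k + 1 := by
      obtain ⟨X, hXsub, hX⟩ := Finset.exists_subset_card_eq
        (s := (Finset.univ : Finset (Fin n))) (n := k - 1)
        (by rw [Finset.card_univ, Fintype.card_fin]; omega)
      have hXr : Module.finrank F (C.map (res F X)) = k - 1 := by
        rw [h X, hX, min_eq_left]; omega
      have := rank_eq C X
      rw [hXr, hk] at this
      have hkerne : LinearMap.ker ((res F X).domRestrict C) ≠ ⊥ := by
        intro hb
        rw [hb, finrank_bot] at this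
        omega
      obtain ⟨c, hcker, hcne⟩ := Submodule.exists_mem_ne_zero_of_ne_bot hkerne
      have hcz : ∀ x ∈ X, (c : Fin n → F) x = 0 := (mem_ker_iff C X c).mp hcker
      have hw : hammingNorm (c : Fin n → F) ≤ n - (k - 1) := by
        have := norm_le (c : Fin n → F) X hcz
        rwa [hX] at this
      refine ⟨hammingNorm (c : Fin n → F),
        ⟨c, c.2, fun hcontra => hcne (Subtype.ext hcontra), rfl⟩, ?_⟩
      omega
    obtain ⟨w, hwS, hw⟩ := hub
    have h1 : sInf {w : ℕ | ∃ c ∈ C, c ≠ 0 ∧ hammingNorm c = w} ≤ n - k + 1 :=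
      le_trans (Nat.sInf_le hwS) hw
    have h2 : n - k + 1 ≤ sInf {w : ℕ | ∃ c ∈ C, c ≠ 0 ∧ hammingNorm c = w} :=
      le_csInf hSne hlb
    omega
end

section
/- (Tutte) Let M = (ρ, E) be a finite matroid. Then M is linearly representable over the two-element field F_2 if and only if there are no sets X ⊆ Y ⊆ E such that the minor M|Y/X is isomorphic to the uniform matroid U_4^2. -/
/-- A matroid presented by its rank function `rk : 2^E → ℤ`, satisfying the rank
axioms (R.1) `0 ≤ rk X ≤ |X|`, (R.2) monotonicity, and (R.3) submodularity. -/
structure RkMatroid (E : Type) [DecidableEq E] where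
  rk : Finset E → ℤ
  rk_nonneg : ∀ X : Finset E, 0 ≤ rk X
  rk_le_card : ∀ X : Finset E, rk X ≤ (X.card : ℤ)
  rk_mono : ∀ ⦃X Y : Finset E⦄, X ⊆ Y → rk X ≤ rk Y
  rk_submod : ∀ X Y : Finset E, rk (X ∪ Y) + rk (X ∩ Y) ≤ rk X + rk Y

/-- A matroid (given by its rank function on the ground set `E`) is representable over a
field `F` if there are an `F`-vector space `V` and a map `φ : E → V` such that a set
`I ⊆ E` is independent (i.e. `rk I = |I|`) exactly when the family `(φ e)_{e ∈ I}` is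
linearly independent over `F`. -/
def RepresentableRk (F : Type) [Field F] {E : Type} (rk : Finset E → ℤ) : Prop :=
  ∃ (V : Type) (_ : AddCommGroup V) (_ : Module F V) (φ : E → V),
    ∀ I : Finset E,
      rk I = (I.card : ℤ) ↔ LinearIndependent F (fun i : {x // x ∈ I} => φ (i : E))

def RHSPred {E : Type} [DecidableEq E] (rk : Finset E → ℤ) : Prop :=
  ∃ (X Y : Finset E), X ⊆ Y ∧ ∃ ψ : {a // a ∈ Y \ X} ≃ Fin 4,
      ∀ A : Finset {a // a ∈ Y \ X},
        rk (A.image Subtype.val ∪ X) - rk X =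
          min ((A.map ψ.toEmbedding).card : ℤ) (2 : ℤ)

def Pat {E : Type} [DecidableEq E] (rk : Finset E → ℤ) : Prop :=
  ∃ (X : Finset E) (a b c d : E),
    a ≠ b ∧ a ≠ c ∧ a ≠ d ∧ b ≠ c ∧ b ≠ d ∧ c ≠ d ∧
    a ∉ X ∧ b ∉ X ∧ c ∉ X ∧ d ∉ X ∧
    ∀ T ⊆ ({a, b, c, d} : Finset E), rk (T ∪ X) - rk X = min (T.card : ℤ) 2

lemma li_iff {F V E : Type} [Field F] [AddCommGroup V] [Module F V] [DecidableEq E]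
    (φ : E → V) (T : Finset E) :
    LinearIndependent F (fun i : {x // x ∈ T} => φ i) ↔
    ∀ f : E → F, ∑ x ∈ T, f x • φ x = 0 → ∀ x ∈ T, f x = 0 := by
  rw [Fintype.linearIndependent_iff]
  constructor
  · intro h f hf x hx
    exact h (fun i => f i) (by rw [← hf, Finset.sum_coe_sort T (fun x => f x • φ x)]) ⟨x, hx⟩
  · intro h g hg i
    classical
    set f : E → F := fun x => if hx : x ∈ T then g ⟨x, hx⟩ else 0 with hfdef
    have hsum : ∑ x ∈ T, f x • φ x = ∑ i : {x // x ∈ T}, g i • φ i := by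
      rw [← Finset.sum_coe_sort T (fun x => f x • φ x)]
      apply Finset.sum_congr rfl
      intro j _
      simp only [hfdef, j.2, dif_pos, Subtype.coe_eta]
    have := h f (by rw [hsum]; exact hg) i i.2
    simpa only [hfdef, i.2, dif_pos, Subtype.coe_eta] using this


namespace RkMatroid
variable {E : Type} [DecidableEq E] (M : RkMatroid E)

lemma rk_empty : M.rk ∅ = 0 :=
  le_antisymm (by simpa using M.rk_le_card ∅) (M.rk_nonneg ∅)

lemma rk_insert_le (x : E) (X : Finset E) : M.rk (insert x X) ≤ M.rk X + 1 := by
  have h := M.rk_submod X {x}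
  have h1 : M.rk {x} ≤ 1 := by simpa using M.rk_le_card {x}
  have h2 : 0 ≤ M.rk (X ∩ {x}) := M.rk_nonneg _
  have : X ∪ {x} = insert x X := by
    ext a; simp [or_comm]
  rw [this] at h; omega

lemma le_rk_insert (x : E) (X : Finset E) : M.rk X ≤ M.rk (insert x X) :=
  M.rk_mono (Finset.subset_insert x X)

lemma rk_union_le_card (X S : Finset E) : M.rk (X ∪ S) ≤ M.rk X + (S.card : ℤ) := by
  induction S using Finset.induction with
  | empty => simpa using M.rk_mono (Finset.union_subset (subset_refl X) (Finset.empty_subset X))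
  | @insert a S ha ih =>
    have h1 : X ∪ insert a S = insert a (X ∪ S) := Finset.union_insert a X S
    have h2 := M.rk_insert_le a (X ∪ S)
    rw [h1, Finset.card_insert_of_notMem ha]
    push_cast
    omega

lemma indep_subset {I J : Finset E} (hJ : M.rk J = J.card) (hIJ : I ⊆ J) :
    M.rk I = I.card := by
  have h1 : J = I ∪ (J \ I) := by
    ext a; simp; tauto
  have h2 : M.rk J ≤ M.rk I + ((J \ I).card : ℤ) := by
    have := M.rk_union_le_card I (J \ I); rwa [← h1] at this
  have h3 : (J \ I).card = J.card - I.card := Finset.card_sdiff_of_subset hIJ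
  have h4 : I.card ≤ J.card := Finset.card_le_card hIJ
  have h5 := M.rk_le_card I
  rw [h3] at h2
  push_cast [Nat.cast_sub h4] at h2
  omega

/-- closure lemma: adding elements which don't increase the rank doesn't change it. -/
lemma rk_union_eq_of_forall {X S : Finset E} (h : ∀ x ∈ S, M.rk (insert x X) = M.rk X) :
    M.rk (X ∪ S) = M.rk X := by
  induction S using Finset.induction with
  | empty => simp
  | @insert a S ha ih =>
    have hS : ∀ x ∈ S, M.rk (insert x X) = M.rk X := fun x hx => h x (by simp [hx])
    have ihS := ih hS
    have ha' : M.rk (insert a X) = M.rk X := h a (by simp)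
    have h1 : X ∪ insert a S = insert a (X ∪ S) := Finset.union_insert a X S
    rw [h1]
    have hsub := M.rk_submod (X ∪ S) (insert a X)
    have e1 : (X ∪ S) ∪ insert a X = insert a (X ∪ S) := by ext b; simp; tauto

    have e2 : X ⊆ (X ∪ S) ∩ insert a X := by
      intro b hb; simp [hb]
    have h2 : M.rk X ≤ M.rk ((X ∪ S) ∩ insert a X) := M.rk_mono e2
    have h3 : M.rk (X ∪ S) ≤ M.rk (insert a (X ∪ S)) :=
      M.rk_mono (Finset.subset_insert _ _)
    rw [e1] at hsub
    omega

lemma exists_basis (X : Finset E) :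
    ∃ I : Finset E, I ⊆ X ∧ M.rk I = I.card ∧ (I.card : ℤ) = M.rk X := by
  classical
  have hne : (X.powerset.filter (fun I => M.rk I = I.card)).Nonempty := by
    refine ⟨∅, ?_⟩
    simp [M.rk_empty]
  obtain ⟨I, hI, hmax⟩ := Finset.exists_max_image _ (fun I => I.card) hne
  simp only [Finset.mem_filter, Finset.mem_powerset] at hI
  obtain ⟨hIX, hIind⟩ := hI
  refine ⟨I, hIX, hIind, ?_⟩
  have hall : ∀ x ∈ X, M.rk (insert x I) = M.rk I := by
    intro x hx
    by_cases hxI : x ∈ I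
    · rw [Finset.insert_eq_self.2 hxI]
    by_contra hne'
    have h1 := M.rk_insert_le x I
    have h2 := M.le_rk_insert x I
    have h3 : M.rk (insert x I) = M.rk I + 1 := by omega
    have hcard : (insert x I).card = I.card + 1 := Finset.card_insert_of_notMem hxI
    have hind : M.rk (insert x I) = ((insert x I).card : ℤ) := by
      rw [h3, hIind, hcard]; push_cast; ring
    have hmem : insert x I ∈ X.powerset.filter (fun J => M.rk J = J.card) := by
      simp only [Finset.mem_filter, Finset.mem_powerset]
      exact ⟨Finset.insert_subset hx hIX, hind⟩
    have := hmax _ hmem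
    omega
  have : M.rk (I ∪ X) = M.rk I := M.rk_union_eq_of_forall hall
  have hIX' : I ∪ X = X := Finset.union_eq_right.2 hIX
  rw [hIX'] at this
  omega

lemma pat_rhs {rk : Finset E → ℤ} (h : Pat rk) : RHSPred rk := by
  classical
  obtain ⟨X, a, b, c, d, hab, hac, had, hbc, hbd, hcd, haX, hbX, hcX, hdX, hT⟩ := h
  set Q : Finset E := {a, b, c, d} with hQ
  set Y : Finset E := X ∪ Q with hY
  have hYX : Y \ X = Q := by
    ext x
    rw [Finset.mem_sdiff, hY, Finset.mem_union]
    constructor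
    · rintro ⟨h1 | h1, h2⟩
      · exact absurd h1 h2
      · exact h1
    · intro hx
      refine ⟨Or.inr hx, ?_⟩
      rw [hQ] at hx
      simp only [Finset.mem_insert, Finset.mem_singleton] at hx
      rcases hx with rfl | rfl | rfl | rfl <;> assumption
  have hQcard : Q.card = 4 := by
    rw [hQ, show ({a,b,c,d} : Finset E) = insert a (insert b (insert c {d})) from rfl,
      Finset.card_insert_of_notMem (by simp [hab, hac, had]),
      Finset.card_insert_of_notMem (by simp [hbc, hbd]),
      Finset.card_insert_of_notMem (by simp [hcd]), Finset.card_singleton]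
  have hcard : (Y \ X).card = 4 := by rw [hYX]; exact hQcard
  refine ⟨X, Y, Finset.subset_union_left, Finset.equivFinOfCardEq hcard, ?_⟩
  intro A
  have hScard : (A.image Subtype.val).card = A.card :=
    Finset.card_image_of_injective _ Subtype.val_injective
  have hSQ : A.image Subtype.val ⊆ Q := by
    intro x hx
    obtain ⟨⟨x', hx'⟩, _, rfl⟩ := Finset.mem_image.1 hx
    rwa [← hYX]
  rw [Finset.card_map, ← hScard]
  exact hT _ hSQ

/-- Restriction of a matroid to `G`. -/
def res (G : Finset E) : RkMatroid E where
  rk A := M.rk (A ∩ G)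
  rk_nonneg A := M.rk_nonneg _
  rk_le_card A := le_trans (M.rk_le_card _)
    (by exact_mod_cast Finset.card_le_card (Finset.inter_subset_left))
  rk_mono X Y h := M.rk_mono (Finset.inter_subset_inter h (subset_refl G))
  rk_submod X Y := by
    have e1 : (X ∪ Y) ∩ G = (X ∩ G) ∪ (Y ∩ G) := Finset.union_inter_distrib_right X Y G
    have e2 : (X ∩ Y) ∩ G = (X ∩ G) ∩ (Y ∩ G) := by
      ext x; simp only [Finset.mem_inter]; tauto
    simp only [e1, e2]
    exact M.rk_submod _ _

@[simp] lemma res_rk (G A : Finset E) : (M.res G).rk A = M.rk (A ∩ G) := rfl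

/-- Contraction of a matroid by a non-loop element `b`. -/
def con (b : E) : RkMatroid E where
  rk A := M.rk (insert b A) - M.rk {b}
  rk_nonneg A := by
    have := M.rk_mono (show {b} ⊆ insert b A by simp)
    omega
  rk_le_card A := by
    have h1 := M.rk_union_le_card {b} A
    rw [show ({b} : Finset E) ∪ A = insert b A from by ext x; simp] at h1
    omega
  rk_mono X Y h := by
    have := M.rk_mono (Finset.insert_subset_insert b h)
    omega
  rk_submod X Y := by
    have e1 : insert b X ∪ insert b Y = insert b (X ∪ Y) := by
      ext x; simp only [Finset.mem_union, Finset.mem_insert]; tauto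
    have e2 : insert b X ∩ insert b Y = insert b (X ∩ Y) := by
      ext x; simp only [Finset.mem_inter, Finset.mem_insert]; tauto
    have := M.rk_submod (insert b X) (insert b Y)
    rw [e1, e2] at this
    omega

@[simp] lemma con_rk (b : E) (A : Finset E) :
    (M.con b).rk A = M.rk (insert b A) - M.rk {b} := rfl

lemma pat_res {G : Finset E} (h : Pat (M.res G).rk) : Pat M.rk := by
  obtain ⟨X, a, b, c, d, hab, hac, had, hbc, hbd, hcd, haX, hbX, hcX, hdX, hT⟩ := h
  have memG : ∀ q ∈ ({a, b, c, d} : Finset E), q ∈ G := by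
    intro q hq
    by_contra hqG
    have h1 := hT {q} (Finset.singleton_subset_iff.2 hq)
    have e : ({q} ∪ X) ∩ G = X ∩ G := by
      ext x
      simp only [Finset.mem_inter, Finset.mem_union, Finset.mem_singleton]
      constructor
      · rintro ⟨rfl | hx, hxG⟩
        · exact absurd hxG hqG
        · exact ⟨hx, hxG⟩
      · rintro ⟨hx, hxG⟩; exact ⟨Or.inr hx, hxG⟩
    rw [res_rk, res_rk, e, Finset.card_singleton] at h1
    simp at h1
  refine ⟨X ∩ G, a, b, c, d, hab, hac, had, hbc, hbd, hcd,
    fun hx => haX (Finset.mem_inter.1 hx).1, fun hx => hbX (Finset.mem_inter.1 hx).1,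
    fun hx => hcX (Finset.mem_inter.1 hx).1, fun hx => hdX (Finset.mem_inter.1 hx).1, ?_⟩
  intro T hTsub
  have h1 := hT T hTsub
  have e : (T ∪ X) ∩ G = T ∪ (X ∩ G) := by
    ext x
    simp only [Finset.mem_inter, Finset.mem_union]
    constructor
    · rintro ⟨hx | hx, hxG⟩
      · exact Or.inl hx
      · exact Or.inr ⟨hx, hxG⟩
    · rintro (hx | ⟨hx, hxG⟩)
      · exact ⟨Or.inl hx, memG x (hTsub hx)⟩
      · exact ⟨Or.inr hx, hxG⟩
  rw [res_rk, res_rk, e] at h1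
  exact h1

lemma pat_con {b : E} (h : Pat (M.con b).rk) : Pat M.rk := by
  obtain ⟨X, a₁, a₂, a₃, a₄, hab, hac, had, hbc, hbd, hcd, haX, hbX, hcX, hdX, hT⟩ := h
  have memb : ∀ q ∈ ({a₁, a₂, a₃, a₄} : Finset E), q ≠ b := by
    intro q hq hqb
    have h1 := hT {q} (Finset.singleton_subset_iff.2 hq)
    rw [hqb] at h1
    have e : insert b ({b} ∪ X) = insert b X := by
      ext x; simp only [Finset.mem_insert, Finset.mem_union, Finset.mem_singleton]; tauto
    rw [con_rk, con_rk, e, Finset.card_singleton] at h1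
    simp at h1
  refine ⟨insert b X, a₁, a₂, a₃, a₄, hab, hac, had, hbc, hbd, hcd, ?_, ?_, ?_, ?_, ?_⟩
  · simp only [Finset.mem_insert]
    rintro (h | h)
    · exact memb a₁ (by simp) h
    · exact haX h
  · simp only [Finset.mem_insert]
    rintro (h | h)
    · exact memb a₂ (by simp) h
    · exact hbX h
  · simp only [Finset.mem_insert]
    rintro (h | h)
    · exact memb a₃ (by simp) h
    · exact hcX h
  · simp only [Finset.mem_insert]
    rintro (h | h)
    · exact memb a₄ (by simp) h
    · exact hdX h
  · intro T hTsub
    have h1 := hT T hTsub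
    have e : insert b (T ∪ X) = T ∪ insert b X := by
      ext x; simp only [Finset.mem_insert, Finset.mem_union]; tauto
    rw [con_rk, con_rk, e] at h1
    have e2 : insert b X = insert b X := rfl
    omega

lemma rk_insert_union {I : Finset E} (A : Finset E) {x : E}
    (h : M.rk (insert x I) = M.rk I) : M.rk (insert x (A ∪ I)) = M.rk (A ∪ I) := by
  have hsub := M.rk_submod (A ∪ I) (insert x I)
  have e1 : (A ∪ I) ∪ insert x I = insert x (A ∪ I) := by
    ext b; simp only [Finset.mem_union, Finset.mem_insert]; tauto
  have e2 : I ⊆ (A ∪ I) ∩ insert x I := by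
    intro b hb
    rw [Finset.mem_inter]
    exact ⟨Finset.mem_union_right _ hb, Finset.mem_insert_of_mem hb⟩
  have h2 : M.rk I ≤ M.rk ((A ∪ I) ∩ insert x I) := M.rk_mono e2
  have h3 : M.rk (A ∪ I) ≤ M.rk (insert x (A ∪ I)) := M.rk_mono (Finset.subset_insert _ _)
  rw [e1] at hsub
  omega

lemma rk_union_eq_basis {I X : Finset E} (S : Finset E) (hIX : I ⊆ X)
    (hIrk : (I.card : ℤ) = M.rk X) (hind : M.rk I = I.card) :
    M.rk (S ∪ X) = M.rk (S ∪ I) := by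
  have hx : ∀ x ∈ X, M.rk (insert x I) = M.rk I := by
    intro x hx
    have h1 : M.rk (insert x I) ≤ M.rk X := M.rk_mono (Finset.insert_subset hx hIX)
    have h2 := M.le_rk_insert x I
    omega
  have hx2 : ∀ x ∈ X, M.rk (insert x (S ∪ I)) = M.rk (S ∪ I) :=
    fun x hxX => M.rk_insert_union S (hx x hxX)
  have h3 : M.rk ((S ∪ I) ∪ X) = M.rk (S ∪ I) := M.rk_union_eq_of_forall hx2
  have e : (S ∪ I) ∪ X = S ∪ X := by
    rw [Finset.union_assoc, Finset.union_eq_right.mpr hIX]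
  rwa [e] at h3

theorem easy_direction (h : RepresentableRk (ZMod 2) M.rk) : ¬ RHSPred M.rk := by
  rintro ⟨X, Y, hXY, ψ, hcond⟩
  obtain ⟨V, _, _, φ, hrep⟩ := h
  classical
  set a : Fin 4 → E := fun i => ((ψ.symm i) : E) with ha
  have ha_inj : Function.Injective a :=
    Subtype.val_injective.comp ψ.symm.injective
  have ha_mem : ∀ i, a i ∈ Y \ X := fun i => (ψ.symm i).2
  have ha_notX : ∀ i, a i ∉ X := fun i => (Finset.mem_sdiff.1 (ha_mem i)).2
  -- rank facts for subsets of the quad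
  have hrk : ∀ P : Finset (Fin 4), M.rk (P.image a ∪ X) = M.rk X + min (P.card : ℤ) 2 := by
    intro P
    have h1 := hcond (P.map ψ.symm.toEmbedding)
    have h2 : (P.map ψ.symm.toEmbedding).image Subtype.val = P.image a := by
      ext x
      simp only [Finset.mem_image, Finset.mem_map, Equiv.coe_toEmbedding]
      constructor
      · rintro ⟨b, ⟨i, hi, rfl⟩, rfl⟩; exact ⟨i, hi, rfl⟩
      · rintro ⟨i, hi, rfl⟩; exact ⟨ψ.symm i, ⟨i, hi, rfl⟩, rfl⟩
    have h3 : ((P.map ψ.symm.toEmbedding).map ψ.toEmbedding).card = P.card := by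
      simp [Finset.card_map]
    rw [h2, h3] at h1
    omega
  -- basis of X
  obtain ⟨I, hIX, hIind, hIcard⟩ := M.exists_basis X
  have hbridge : ∀ P : Finset (Fin 4),
      M.rk (P.image a ∪ I) = (I.card : ℤ) + min (P.card : ℤ) 2 := by
    intro P
    rw [← M.rk_union_eq_basis (P.image a) hIX hIcard hIind, hrk P]
    omega
  have hdisj : ∀ P : Finset (Fin 4), Disjoint (P.image a) I := by
    intro P
    rw [Finset.disjoint_left]
    rintro x hx hxI
    obtain ⟨i, _, rfl⟩ := Finset.mem_image.1 hx
    exact ha_notX i (hIX hxI)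
  have hcardU : ∀ P : Finset (Fin 4), ((P.image a ∪ I).card : ℤ) = P.card + I.card := by
    intro P
    rw [Finset.card_union_of_disjoint (hdisj P), Finset.card_image_of_injective _ ha_inj]
    push_cast; ring
  -- independence facts
  have hLI : ∀ P : Finset (Fin 4), P.card ≤ 2 →
      ∀ f : E → ZMod 2, ∑ x ∈ P.image a ∪ I, f x • φ x = 0 →
        ∀ x ∈ P.image a ∪ I, f x = 0 := by
    intro P hP
    rw [← li_iff, ← hrep]
    rw [hbridge P, hcardU P]
    have : min (P.card : ℤ) 2 = (P.card : ℤ) := by omega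
    omega
  have hDEP : ∀ P : Finset (Fin 4), P.card = 3 →
      ∃ f : E → ZMod 2, (∑ x ∈ P.image a ∪ I, f x • φ x = 0) ∧
        ∃ x ∈ P.image a ∪ I, f x ≠ 0 := by
    intro P hP
    have hne : ¬ (M.rk (P.image a ∪ I) = ((P.image a ∪ I).card : ℤ)) := by
      rw [hbridge P, hcardU P]
      have hc : (P.card : ℤ) = 3 := by exact_mod_cast congrArg (Nat.cast : ℕ → ℤ) hP
      omega
    rw [hrep, li_iff] at hne
    push_neg at hne
    obtain ⟨f, hf0, x, hx, hfx⟩ := hne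
    exact ⟨f, hf0, x, hx, hfx⟩
  -- split sums
  have hsplit : ∀ (P : Finset (Fin 4)) (f : E → ZMod 2),
      ∑ x ∈ P.image a ∪ I, f x • φ x
        = (∑ i ∈ P, f (a i) • φ (a i)) + ∑ x ∈ I, f x • φ x := by
    intro P f
    rw [Finset.sum_union (hdisj P), Finset.sum_image (fun i _ j _ hij => ha_inj hij)]
  -- triple analysis
  have key3 : ∀ P : Finset (Fin 4), P.card = 3 →
      ∃ f : E → ZMod 2, (∀ i ∈ P, f (a i) = 1) ∧
        (∑ i ∈ P, φ (a i)) + ∑ x ∈ I, f x • φ x = 0 := by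
    intro P hP
    obtain ⟨f, hf0, x₀, hx₀, hfx₀⟩ := hDEP P hP
    have hall : ∀ i ∈ P, f (a i) ≠ 0 := by
      intro i hi hzero
      have hP' : (P.erase i).card ≤ 2 := by
        rw [Finset.card_erase_of_mem hi, hP]
      have hsum' : ∑ x ∈ (P.erase i).image a ∪ I, f x • φ x = 0 := by
        rw [hsplit]
        rw [hsplit] at hf0
        have : ∑ j ∈ P.erase i, f (a j) • φ (a j) = ∑ j ∈ P, f (a j) • φ (a j) := by
          rw [← Finset.add_sum_erase P _ hi, hzero, zero_smul, zero_add]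
        rw [this]; exact hf0
      have hzeroOn := hLI _ hP' f hsum'
      rcases Finset.mem_union.1 hx₀ with hx | hx
      · obtain ⟨j, hj, rfl⟩ := Finset.mem_image.1 hx
        by_cases hji : j = i
        · subst hji; exact hfx₀ hzero
        · exact hfx₀ (hzeroOn _ (Finset.mem_union_left _
            (Finset.mem_image_of_mem a (Finset.mem_erase.2 ⟨hji, hj⟩))))
      · exact hfx₀ (hzeroOn _ (Finset.mem_union_right _ hx))
    have hone : ∀ i ∈ P, f (a i) = 1 := by
      intro i hi
      have hdec : ∀ c : ZMod 2, c ≠ 0 → c = 1 := by decide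
      exact hdec _ (hall i hi)
    refine ⟨f, hone, ?_⟩
    rw [hsplit] at hf0
    have : ∑ i ∈ P, f (a i) • φ (a i) = ∑ i ∈ P, φ (a i) :=
      Finset.sum_congr rfl (fun i hi => by rw [hone i hi, one_smul])
    rwa [this] at hf0
  obtain ⟨f, hf1, hfsum⟩ := key3 {0, 1, 2} (by decide)
  obtain ⟨g, hg1, hgsum⟩ := key3 {0, 1, 3} (by decide)
  -- expand the triple sums
  have e012 : ∑ i ∈ ({0, 1, 2} : Finset (Fin 4)), φ (a i)
      = φ (a 0) + φ (a 1) + φ (a 2) := by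
    rw [show ({0,1,2} : Finset (Fin 4)) = insert 0 (insert 1 {2}) from rfl,
      Finset.sum_insert (by decide), Finset.sum_insert (by decide), Finset.sum_singleton]
    abel
  have e013 : ∑ i ∈ ({0, 1, 3} : Finset (Fin 4)), φ (a i)
      = φ (a 0) + φ (a 1) + φ (a 3) := by
    rw [show ({0,1,3} : Finset (Fin 4)) = insert 0 (insert 1 {3}) from rfl,
      Finset.sum_insert (by decide), Finset.sum_insert (by decide), Finset.sum_singleton]
    abel
  rw [e012] at hfsum
  rw [e013] at hgsum
  -- the combination
  set k : E → ZMod 2 := fun x => if x = a 2 ∨ x = a 3 then 1 else f x + g x with hk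
  have hvv : ∀ v : V, v + v = 0 := by
    intro v
    rw [← two_smul (ZMod 2) v, show (2 : ZMod 2) = 0 by decide, zero_smul]
  have hksum : ∑ x ∈ ({2, 3} : Finset (Fin 4)).image a ∪ I, k x • φ x = 0 := by
    rw [hsplit]
    have e23 : ∑ i ∈ ({2, 3} : Finset (Fin 4)), k (a i) • φ (a i)
        = φ (a 2) + φ (a 3) := by
      rw [show ({2,3} : Finset (Fin 4)) = insert 2 {3} from rfl,
        Finset.sum_insert (by decide), Finset.sum_singleton]
      have k2 : k (a 2) = 1 := by rw [hk]; simp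
      have k3 : k (a 3) = 1 := by rw [hk]; simp
      rw [k2, k3, one_smul, one_smul]
    have eI : ∑ x ∈ I, k x • φ x = (∑ x ∈ I, f x • φ x) + ∑ x ∈ I, g x • φ x := by
      rw [← Finset.sum_add_distrib]
      apply Finset.sum_congr rfl
      intro x hx
      have hx2 : x ≠ a 2 := fun hxa => ha_notX 2 (hxa ▸ hIX hx)
      have hx3 : x ≠ a 3 := fun hxa => ha_notX 3 (hxa ▸ hIX hx)
      rw [hk]
      simp only [hx2, hx3, or_self, if_false]
      rw [add_smul]
    rw [e23, eI]
    have hXYsum : (φ (a 0) + φ (a 1) + φ (a 2) + ∑ x ∈ I, f x • φ x)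
        + (φ (a 0) + φ (a 1) + φ (a 3) + ∑ x ∈ I, g x • φ x) = 0 := by
      rw [hfsum, hgsum, add_zero]
    have rearr : (φ (a 0) + φ (a 1) + φ (a 2) + ∑ x ∈ I, f x • φ x)
        + (φ (a 0) + φ (a 1) + φ (a 3) + ∑ x ∈ I, g x • φ x)
        = (φ (a 2) + φ (a 3) + ((∑ x ∈ I, f x • φ x) + ∑ x ∈ I, g x • φ x))
          + ((φ (a 0) + φ (a 0)) + (φ (a 1) + φ (a 1))) := by abel
    rw [rearr, hvv (φ (a 0)), hvv (φ (a 1)), add_zero, add_zero] at hXYsum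
    exact hXYsum
  have hk2zero : k (a 2) = 0 := by
    refine hLI {2, 3} (by decide) k hksum (a 2) ?_
    exact Finset.mem_union_left _ (Finset.mem_image_of_mem a (by decide))
  rw [hk] at hk2zero
  simp at hk2zero

lemma endgame [Fintype E] (P Q : RkMatroid E) (B W : Finset E)
    (hdisj : ∀ b ∈ B, b ∉ W)
    (hagree0 : ∀ S : Finset E, S ⊆ B ∪ W → S ≠ W → P.rk S = Q.rk S)
    (hdiff : Q.rk W < P.rk W)
    (hBP : P.rk B = (B.card : ℤ))
    (hUP : P.rk Finset.univ = (B.card : ℤ)) (hUQ : Q.rk Finset.univ = (B.card : ℤ))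
    (hWne : W.Nonempty)
    (hH : ∀ e ∈ W, ∀ b ∈ B, (P.rk (insert e (B.erase b)) = (B.card : ℤ) ↔
      Q.rk (insert e (B.erase b)) = (B.card : ℤ))) :
    Pat P.rk := by
  classical
  have hWsub : W ⊆ B ∪ W := Finset.subset_union_right
  have hBsub : B ⊆ B ∪ W := Finset.subset_union_left
  have hagree : ∀ S : Finset E, S ⊆ B ∪ W → S ≠ W → P.rk S = Q.rk S := hagree0
  set m : ℤ := Q.rk W with hm
  set r : ℤ := (B.card : ℤ) with hr
  -- step 1/2: P.rk W = m + 1 and all deleted-point ranks are m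
  have herase_ne : ∀ w ∈ W, W.erase w ≠ W := by
    intro w hw h
    have := Finset.notMem_erase w W
    rw [h] at this
    exact this hw
  have hQe : ∀ w ∈ W, Q.rk (W.erase w) ≤ m := by
    intro w hw; exact Q.rk_mono (Finset.erase_subset w W)
  have hPW : P.rk W = m + 1 ∧ ∀ w ∈ W, P.rk (W.erase w) = m := by
    obtain ⟨w₀, hw₀⟩ := hWne
    have h1 : P.rk W ≤ P.rk (W.erase w₀) + 1 := by
      have := P.rk_insert_le w₀ (W.erase w₀)
      rwa [Finset.insert_erase hw₀] at this
    have h2 : P.rk (W.erase w₀) = Q.rk (W.erase w₀) :=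
      hagree _ ((Finset.erase_subset w₀ W).trans hWsub) (herase_ne w₀ hw₀)
    have hup : P.rk W = m + 1 := by
      have := hQe w₀ hw₀; omega
    refine ⟨hup, fun w hw => ?_⟩
    have h3 : P.rk W ≤ P.rk (W.erase w) + 1 := by
      have := P.rk_insert_le w (W.erase w)
      rwa [Finset.insert_erase hw] at this
    have h4 : P.rk (W.erase w) = Q.rk (W.erase w) :=
      hagree _ ((Finset.erase_subset w W).trans hWsub) (herase_ne w hw)
    have := hQe w hw; omega
  obtain ⟨hPWval, hWe⟩ := hPW
  have hQe' : ∀ w ∈ W, Q.rk (W.erase w) = m := by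
    intro w hw
    rw [← hagree _ ((Finset.erase_subset w W).trans hWsub) (herase_ne w hw)]
    exact hWe w hw
  -- step 3: B nonempty
  have hBne : B.Nonempty := by
    rw [Finset.nonempty_iff_ne_empty]
    rintro rfl
    have h1 : P.rk W ≤ P.rk Finset.univ := P.rk_mono (Finset.subset_univ W)
    have h2 := Q.rk_nonneg W
    have h3 : r = 0 := by rw [hr]; simp
    omega
  -- step 4: ranks of W + b
  have hWb : ∀ b ∈ B, P.rk (insert b W) = m + 1 ∧ Q.rk (insert b W) = m + 1 := by
    intro b hb
    have hne : insert b W ≠ W := by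
      intro h
      exact hdisj b hb (h ▸ Finset.mem_insert_self b W)
    have h1 : P.rk W ≤ P.rk (insert b W) := P.rk_mono (Finset.subset_insert _ _)
    have h2 : Q.rk (insert b W) ≤ m + 1 := Q.rk_insert_le b W
    have h3 : P.rk (insert b W) = Q.rk (insert b W) :=
      hagree _ (Finset.insert_subset (hBsub hb) hWsub) hne
    constructor <;> omega
  -- step 5: r = m + 1
  have hrm : r = m + 1 := by
    have hcl : P.rk (W ∪ B) = P.rk W := by
      apply P.rk_union_eq_of_forall
      intro b hb
      rw [(hWb b hb).1, hPWval]
    have h1 : P.rk B ≤ P.rk (W ∪ B) := P.rk_mono (Finset.subset_union_right)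
    have h2 : P.rk W ≤ P.rk Finset.univ := P.rk_mono (Finset.subset_univ W)
    omega
  -- step 6: r ≥ 2
  have hr2 : 2 ≤ r := by
    by_contra hlt
    have hm0 : m = 0 := by
      have := Q.rk_nonneg W; omega
    have hr1 : r = 1 := by omega
    by_cases hWcard : W.card = 1
    · obtain ⟨w, hWw⟩ := Finset.card_eq_one.1 hWcard
      obtain ⟨b, hb⟩ := hBne
      have hBcard : B = {b} := by
        have hcc : (B.card : ℤ) = 1 := by rw [← hr]; exact hr1
        have : B.card = 1 := by exact_mod_cast hcc
        obtain ⟨b', hb'⟩ := Finset.card_eq_one.1 this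
        rw [hb'] at hb
        rw [hb', Finset.mem_singleton.1 hb]
      have hset : insert w (B.erase b) = W := by
        rw [hBcard, Finset.erase_singleton, hWw]
        rfl
      have hiff := hH w (by rw [hWw]; exact Finset.mem_singleton_self w) b hb
      rw [hset] at hiff
      have : P.rk W = r := by omega
      have h2 : Q.rk W = r := hiff.1 this
      omega
    · have hW2 : 1 < W.card := by
        have := Finset.card_pos.2 hWne
        omega
      have hsing : ∀ w ∈ W, P.rk {w} = 0 := by
        intro w hw
        obtain ⟨w', hw', hww'⟩ := Finset.exists_mem_ne hW2 w
        have hmem : w ∈ W.erase w' := Finset.mem_erase.2 ⟨fun h => hww' h.symm, hw⟩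
        have h1 : Q.rk {w} ≤ Q.rk (W.erase w') :=
          Q.rk_mono (Finset.singleton_subset_iff.2 hmem)
        have h2 : {w} ≠ W := by
          intro h
          rw [← h] at hW2
          simp at hW2
        have h3 := hagree {w} (Finset.singleton_subset_iff.2 (hWsub hw)) h2
        have h4 := P.rk_nonneg {w}
        rw [hQe' w' hw'] at h1
        omega
      have hcl : P.rk (∅ ∪ W) = P.rk ∅ := by
        apply P.rk_union_eq_of_forall
        intro w hw
        rw [show insert w (∅ : Finset E) = {w} from rfl, P.rk_empty]
        exact hsing w hw
      rw [Finset.empty_union, P.rk_empty] at hcl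
      omega
  -- step 7/8: two distinct elements of W
  have hWcard2 : 1 < W.card := by
    have h1 : P.rk W ≤ (W.card : ℤ) := P.rk_le_card W
    omega
  obtain ⟨w, hw⟩ := hWne
  obtain ⟨w', hw', hww'⟩ := Finset.exists_mem_ne hWcard2 w
  set S : Finset E := (W.erase w).erase w' with hS
  have hSw : insert w' S = W.erase w := by
    rw [hS]
    exact Finset.insert_erase (Finset.mem_erase.2 ⟨hww', hw'⟩)
  have hSw' : insert w S = W.erase w' := by
    rw [hS, Finset.erase_right_comm]
    exact Finset.insert_erase (Finset.mem_erase.2 ⟨fun h => hww' h.symm, hw⟩)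
  have hSW : insert w (insert w' S) = W := by
    rw [hSw]
    exact Finset.insert_erase hw
  have hSsubW : S ⊆ W := (Finset.erase_subset _ _).trans (Finset.erase_subset _ _)
  have hwS : w ∉ S := by
    rw [hS]
    intro h
    exact Finset.notMem_erase w W (Finset.mem_of_mem_erase h)
  have hw'S : w' ∉ S := by
    rw [hS]
    intro h
    exact Finset.notMem_erase w' _ h
  have hSne : S ≠ W := fun h => hwS (h ▸ hw)
  -- step 10: rank of S is r - 2
  have hSrk : P.rk S = r - 2 ∧ Q.rk S = r - 2 := by
    have hagS := hagree S (hSsubW.trans hWsub) hSne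
    have hup : P.rk S ≤ m := by
      have : P.rk S ≤ P.rk (W.erase w) := P.rk_mono (by rw [← hSw]; exact Finset.subset_insert _ _)
      rwa [hWe w hw] at this
    have hlow : m ≤ P.rk S + 1 := by
      have := P.rk_insert_le w' S
      rw [hSw, hWe w hw] at this
      omega
    have hnotm : P.rk S ≠ m := by
      intro heq
      have h1 : P.rk (insert w S) = P.rk S := by
        rw [hSw', hWe w' hw', heq]
      have h2 : P.rk (insert w' S) = P.rk S := by
        rw [hSw, hWe w hw, heq]
      have hcl : P.rk (S ∪ {w, w'}) = P.rk S := by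
        apply P.rk_union_eq_of_forall
        intro x hx
        rcases Finset.mem_insert.1 hx with rfl | hx
        · exact h1
        · rw [Finset.mem_singleton.1 hx]; exact h2
      have hWeq : S ∪ {w, w'} = W := by
        rw [← hSW]
        ext x
        simp only [Finset.mem_union, Finset.mem_insert, Finset.mem_singleton]
        tauto
      rw [hWeq] at hcl
      omega
    constructor <;> omega
  -- step 11: pairs {w, b}
  have hwb : ∀ w₀ ∈ W, ∀ b ∈ B, P.rk (insert b (W.erase w₀)) = r ∧
      Q.rk (insert b (W.erase w₀)) = r := by
    intro w₀ hw₀ b hb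
    have hbW : b ∉ W := hdisj b hb
    have hXne : insert b (W.erase w₀) ≠ W := by
      intro h
      exact hbW (h ▸ Finset.mem_insert_self _ _)
    have hunion : insert b (W.erase w₀) ∪ W = insert b W := by
      ext x
      simp only [Finset.mem_union, Finset.mem_insert, Finset.mem_erase]
      constructor
      · rintro ((rfl | ⟨_, hxW⟩) | hxW)
        · exact Or.inl rfl
        · exact Or.inr hxW
        · exact Or.inr hxW
      · rintro (rfl | hxW)
        · exact Or.inl (Or.inl rfl)
        · exact Or.inr hxW
    have hinter : insert b (W.erase w₀) ∩ W = W.erase w₀ := by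
      ext x
      simp only [Finset.mem_inter, Finset.mem_insert, Finset.mem_erase]
      constructor
      · rintro ⟨rfl | ⟨hxne, hxW⟩, hxW'⟩
        · exact absurd hxW' hbW
        · exact ⟨hxne, hxW⟩
      · rintro ⟨hxne, hxW⟩
        exact ⟨Or.inr ⟨hxne, hxW⟩, hxW⟩
    have hsub := Q.rk_submod (insert b (W.erase w₀)) W
    rw [hunion, hinter, (hWb b hb).2, hQe' w₀ hw₀] at hsub
    have hup : Q.rk (insert b (W.erase w₀)) ≤ r := by
      rw [← hUQ]; exact Q.rk_mono (Finset.subset_univ _)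
    have := hagree _ (Finset.insert_subset (hBsub hb)
      ((Finset.erase_subset _ _).trans hWsub)) hXne
    constructor <;> omega
  -- step 12: singletons b
  have hSb : ∀ b ∈ B, P.rk (insert b S) = r - 1 ∧ Q.rk (insert b S) = r - 1 := by
    intro b hb
    have hbW : b ∉ W := hdisj b hb
    have hXne : insert b S ≠ W := by
      intro h
      exact hbW (h ▸ Finset.mem_insert_self _ _)
    have hunion : insert b S ∪ W = insert b W := by
      ext x
      simp only [Finset.mem_union, Finset.mem_insert]
      constructor
      · rintro ((rfl | hx) | hx)
        · exact Or.inl rfl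
        · exact Or.inr (hSsubW hx)
        · exact Or.inr hx
      · rintro (rfl | hx)
        · exact Or.inl (Or.inl rfl)
        · exact Or.inr hx
    have hinter : insert b S ∩ W = S := by
      ext x
      simp only [Finset.mem_inter, Finset.mem_insert]
      constructor
      · rintro ⟨rfl | hx, hxW⟩
        · exact absurd hxW hbW
        · exact hx
      · intro hx
        exact ⟨Or.inr hx, hSsubW hx⟩
    have hsub := Q.rk_submod (insert b S) W
    rw [hunion, hinter, (hWb b hb).2, hSrk.2] at hsub
    have hup : Q.rk (insert b S) ≤ Q.rk S + 1 := Q.rk_insert_le b S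
    rw [hSrk.2] at hup
    have := hagree _ (Finset.insert_subset (hBsub hb) (hSsubW.trans hWsub)) hXne
    constructor <;> omega
  -- step 13: a good pair b, b'
  have hbb' : ∃ b ∈ B, ∃ b' ∈ B, b ≠ b' ∧ P.rk (insert b' (insert b S)) = r := by
    by_contra hcon
    push_neg at hcon
    obtain ⟨b, hb⟩ := hBne
    have hstep : ∀ b' ∈ B, Q.rk (insert b' (insert b S)) = Q.rk (insert b S) := by
      intro b' hb'
      by_cases hbb : b = b'
      · rw [← hbb, Finset.insert_idem]
      · have hXne : insert b' (insert b S) ≠ W := by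
          intro h
          exact hdisj b hb (h ▸ Finset.mem_insert_of_mem (Finset.mem_insert_self _ _))
        have hag := hagree _ (Finset.insert_subset (hBsub hb') (Finset.insert_subset
          (hBsub hb) (hSsubW.trans hWsub))) hXne
        have hne := hcon b hb b' hb' hbb
        have h1 : Q.rk (insert b S) ≤ Q.rk (insert b' (insert b S)) :=
          Q.rk_mono (Finset.subset_insert _ _)
        have h2 : Q.rk (insert b' (insert b S)) ≤ Q.rk (insert b S) + 1 :=
          Q.rk_insert_le b' (insert b S)
        rw [(hSb b hb).2] at h1 h2 ⊢
        omega
    have hcl : Q.rk ((insert b S) ∪ B) = Q.rk (insert b S) :=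
      Q.rk_union_eq_of_forall hstep
    have hmono : Q.rk B ≤ Q.rk ((insert b S) ∪ B) := Q.rk_mono Finset.subset_union_right
    have hBQ : Q.rk B = r := by
      rw [← hagree B hBsub (fun h => hdisj b hb (h ▸ hb))]
      exact hBP
    rw [(hSb b hb).2] at hcl
    omega
  obtain ⟨b, hb, b', hb', hbne, hbbrk⟩ := hbb'
  -- singleton ranks
  have hsingle : ∀ q ∈ ({w, w', b, b'} : Finset E), P.rk (insert q S) = r - 1 := by
    intro q hq
    have hq4 : q = w ∨ q = w' ∨ q = b ∨ q = b' := by simpa using hq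
    rcases hq4 with h | h | h | h
    · rw [h, hSw', hWe w' hw']; omega
    · rw [h, hSw, hWe w hw]; omega
    · rw [h]; exact (hSb b hb).1
    · rw [h]; exact (hSb b' hb').1
  -- pair ranks
  have hsymm : ∀ x y : E, P.rk (insert x (insert y S)) = r →
      P.rk (insert y (insert x S)) = r := by
    intro x y h
    rwa [Finset.insert_comm]
  have hp1 : P.rk (insert w (insert w' S)) = r := by rw [hSW]; omega
  have hp2 : P.rk (insert w (insert b S)) = r := by
    rw [Finset.insert_comm, hSw']
    exact (hwb w' hw' b hb).1
  have hp3 : P.rk (insert w (insert b' S)) = r := by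
    rw [Finset.insert_comm, hSw']
    exact (hwb w' hw' b' hb').1
  have hp4 : P.rk (insert w' (insert b S)) = r := by
    rw [Finset.insert_comm, hSw]
    exact (hwb w hw b hb).1
  have hp5 : P.rk (insert w' (insert b' S)) = r := by
    rw [Finset.insert_comm, hSw]
    exact (hwb w hw b' hb').1
  have hp6 : P.rk (insert b (insert b' S)) = r := hsymm _ _ hbbrk
  have hpair : ∀ x ∈ ({w, w', b, b'} : Finset E), ∀ y ∈ ({w, w', b, b'} : Finset E),
      x ≠ y → P.rk (insert x (insert y S)) = r := by
    intro x hx y hy hxy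
    have hx4 : x = w ∨ x = w' ∨ x = b ∨ x = b' := by simpa using hx
    have hy4 : y = w ∨ y = w' ∨ y = b ∨ y = b' := by simpa using hy
    rcases hx4 with h1 | h1 | h1 | h1 <;> rcases hy4 with h2 | h2 | h2 | h2 <;>
      rw [h1, h2] <;>
      first
        | exact absurd (h1.trans h2.symm) hxy
        | exact hp1 | exact hp2 | exact hp3 | exact hp4 | exact hp5 | exact hp6
        | exact hsymm _ _ hp1 | exact hsymm _ _ hp2 | exact hsymm _ _ hp3
        | exact hsymm _ _ hp4 | exact hsymm _ _ hp5 | exact hsymm _ _ hp6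
  -- distinctness and non-membership
  have hbW : b ∉ W := hdisj b hb
  have hb'W : b' ∉ W := hdisj b' hb'
  have hwb_ne : w ≠ b := fun h => hbW (h ▸ hw)
  have hwb'_ne : w ≠ b' := fun h => hb'W (h ▸ hw)
  have hw'b_ne : w' ≠ b := fun h => hbW (h ▸ hw')
  have hw'b'_ne : w' ≠ b' := fun h => hb'W (h ▸ hw')
  refine ⟨S, w, w', b, b', hww'.symm, hwb_ne, hwb'_ne, hw'b_ne, hw'b'_ne, hbne,
    hwS, hw'S, fun h => hbW (hSsubW h), fun h => hb'W (hSsubW h), ?_⟩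
  intro T hT
  rw [hSrk.1]
  rcases Nat.lt_or_ge T.card 2 with hc | hc
  · obtain hc0 | hc1 : T.card = 0 ∨ T.card = 1 := by omega
    · rw [Finset.card_eq_zero.1 hc0, Finset.empty_union, Finset.card_empty]
      push_cast
      omega
    · obtain ⟨q, hq'⟩ := Finset.card_eq_one.1 hc1
      have hq : q ∈ ({w, w', b, b'} : Finset E) := by
        rw [hq'] at hT
        exact hT (Finset.mem_singleton_self q)
      have e : {q} ∪ S = insert q S := rfl
      rw [hq', e, hsingle q hq, Finset.card_singleton]
      push_cast
      omega
  · obtain ⟨x, hx, y, hy, hxy⟩ := Finset.one_lt_card.1 hc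
    have hsub : insert x (insert y S) ⊆ T ∪ S := by
      intro z hz
      rcases Finset.mem_insert.1 hz with rfl | hz
      · exact Finset.mem_union_left _ hx
      · rcases Finset.mem_insert.1 hz with rfl | hz
        · exact Finset.mem_union_left _ hy
        · exact Finset.mem_union_right _ hz
    have h1 : r ≤ P.rk (T ∪ S) := by
      rw [← hpair x (hT hx) y (hT hy) hxy]
      exact P.rk_mono hsub
    have h2 : P.rk (T ∪ S) ≤ r := by
      rw [← hUP]
      exact P.rk_mono (Finset.subset_univ _)
    have h3 : (2 : ℤ) ≤ (T.card : ℤ) := by exact_mod_cast hc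
    omega

theorem key [Fintype E] : ∀ n : ℕ, ∀ G : Finset E, G.card ≤ n →
    ∀ M N : RkMatroid E, ∀ B : Finset E, B ⊆ G →
    (∀ A, M.rk A = M.rk (A ∩ G)) → (∀ A, N.rk A = N.rk (A ∩ G)) →
    M.rk B = (B.card : ℤ) → N.rk B = (B.card : ℤ) →
    M.rk Finset.univ = (B.card : ℤ) → N.rk Finset.univ = (B.card : ℤ) →
    (∀ e ∈ G, e ∉ B → ∀ b ∈ B,
      (M.rk (insert e (B.erase b)) = (B.card : ℤ) ↔
        N.rk (insert e (B.erase b)) = (B.card : ℤ))) →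
    (∃ S, M.rk S ≠ N.rk S) → Pat M.rk ∨ Pat N.rk := by
  intro n
  induction n with
  | zero =>
    intro G hG M N B hBG hloopM hloopN _ _ _ _ _ hdis
    obtain ⟨S, hS⟩ := hdis
    exfalso
    apply hS
    have hGe : G = ∅ := Finset.card_eq_zero.1 (Nat.le_zero.1 hG)
    rw [hloopM S, hloopN S, hGe, Finset.inter_empty, M.rk_empty, N.rk_empty]
  | succ n ih =>
    intro G hG M N B hBG hloopM hloopN hBM hBN hUM hUN hH hdis
    classical
    by_contra hcon
    push_neg at hcon
    obtain ⟨hconM, hconN⟩ := hcon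
    set W : Finset E := G \ B with hW
    -- the universal "agree" consequences of minimality
    -- Block D : deletions
    have blockD : ∀ e₀ ∈ G, e₀ ∉ B → ∀ S : Finset E, e₀ ∉ S → M.rk S = N.rk S := by
      intro e₀ he₀G he₀B
      set G' := G.erase e₀ with hG'
      set M' := M.res G' with hM'
      set N' := N.res G' with hN'
      have hBG' : B ⊆ G' := fun x hx => Finset.mem_erase.2 ⟨fun h => he₀B (h ▸ hx), hBG hx⟩
      -- general facts for K ∈ {M, N}
      have gen : ∀ K : RkMatroid E, (∀ A, K.rk A = K.rk (A ∩ G)) →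
          K.rk B = (B.card : ℤ) → K.rk Finset.univ = (B.card : ℤ) →
          ((∀ A, (K.res G').rk A = (K.res G').rk (A ∩ G')) ∧
            (K.res G').rk B = (B.card : ℤ) ∧
            (K.res G').rk Finset.univ = (B.card : ℤ)) := by
        intro K hloop hKB hKU
        refine ⟨?_, ?_, ?_⟩
        · intro A
          rw [res_rk, res_rk]
          congr 1
          rw [Finset.inter_assoc, Finset.inter_self]
        · rw [res_rk, Finset.inter_eq_left.2 hBG']
          exact hKB
        · rw [res_rk, Finset.univ_inter]
          have h1 : K.rk B ≤ K.rk G' := K.rk_mono hBG'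
          have h2 : K.rk G' ≤ K.rk Finset.univ := K.rk_mono (Finset.subset_univ _)
          omega
      obtain ⟨hloopM', hBM', hUM'⟩ := gen M hloopM hBM hUM
      obtain ⟨hloopN', hBN', hUN'⟩ := gen N hloopN hBN hUN
      have hsubE : ∀ (e : E), e ∈ G' → e ∉ B → ∀ b ∈ B,
          insert e (B.erase b) ⊆ G' := by
        intro e heG' heB b hb
        apply Finset.insert_subset heG'
        exact (Finset.erase_subset _ _).trans hBG'
      have hH' : ∀ e ∈ G', e ∉ B → ∀ b ∈ B,
          ((M.res G').rk (insert e (B.erase b)) = (B.card : ℤ) ↔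
            (N.res G').rk (insert e (B.erase b)) = (B.card : ℤ)) := by
        intro e heG' heB b hb
        rw [res_rk, res_rk, Finset.inter_eq_left.2 (hsubE e heG' heB b hb)]
        exact hH e (Finset.mem_of_mem_erase heG') heB b hb
      by_cases hdis' : ∃ S, M'.rk S ≠ N'.rk S
      · exfalso
        have hcard : G'.card ≤ n := by
          rw [hG', Finset.card_erase_of_mem he₀G]
          omega
        rcases ih G' hcard M' N' B hBG' hloopM' hloopN' hBM' hBN' hUM' hUN' hH' hdis' with
          hM | hN
        · exact hconM (M.pat_res hM)
        · exact hconN (N.pat_res hN)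
      · push_neg at hdis'
        intro S hS
        have he₀SG : S ∩ G = S ∩ G' := by
          ext x
          simp only [Finset.mem_inter, hG', Finset.mem_erase]
          constructor
          · rintro ⟨hxS, hxG⟩
            exact ⟨hxS, fun h => hS (h ▸ hxS), hxG⟩
          · rintro ⟨hxS, _, hxG⟩
            exact ⟨hxS, hxG⟩
        have := hdis' S
        rw [hM', hN', res_rk, res_rk] at this
        rw [hloopM S, hloopN S, he₀SG]
        calc M.rk (S ∩ G') = M.rk ((S ∩ G') ∩ G') := by
              rw [Finset.inter_assoc, Finset.inter_self]
          _ = N.rk ((S ∩ G') ∩ G') := by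
              have := hdis' (S ∩ G')
              rw [hM', hN', res_rk, res_rk] at this
              exact this
          _ = N.rk (S ∩ G') := by rw [Finset.inter_assoc, Finset.inter_self]
    -- Block C : contractions
    have blockC : ∀ b₀ ∈ B, ∀ S : Finset E, b₀ ∈ S → M.rk S = N.rk S := by
      intro b₀ hb₀
      set G₂ := G.erase b₀ with hG₂
      set B₂ := B.erase b₀ with hB₂
      have hb₀G : b₀ ∈ G := hBG hb₀
      have hB₂G₂ : B₂ ⊆ G₂ := fun x hx => Finset.mem_erase.2
        ⟨(Finset.mem_erase.1 hx).1, hBG (Finset.mem_erase.1 hx).2⟩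
      have hBpos : 0 < B.card := Finset.card_pos.2 ⟨b₀, hb₀⟩
      have hB₂card : (B₂.card : ℤ) = (B.card : ℤ) - 1 := by
        rw [hB₂, Finset.card_erase_of_mem hb₀]
        push_cast [Nat.cast_sub (by omega : 1 ≤ B.card)]
        ring
      have hinsB₂ : insert b₀ B₂ = B := Finset.insert_erase hb₀
      -- general facts for K ∈ {M, N}
      have gen : ∀ K : RkMatroid E, (∀ A, K.rk A = K.rk (A ∩ G)) →
          K.rk B = (B.card : ℤ) → K.rk Finset.univ = (B.card : ℤ) →
          (K.rk {b₀} = 1 ∧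
           (∀ A, (K.con b₀).rk A = (K.con b₀).rk (A ∩ G₂)) ∧
            (K.con b₀).rk B₂ = (B₂.card : ℤ) ∧
            (K.con b₀).rk Finset.univ = (B₂.card : ℤ)) := by
        intro K hloop hKB hKU
        have hb1 : K.rk {b₀} = 1 := by
          have := K.indep_subset hKB (Finset.singleton_subset_iff.2 hb₀)
          rw [this, Finset.card_singleton]
          rfl
        refine ⟨hb1, ?_, ?_, ?_⟩
        · intro A
          rw [con_rk, con_rk]
          have e1 : insert b₀ (A ∩ G₂) = insert b₀ (A ∩ G) ∩ G := by
            ext x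
            simp only [Finset.mem_insert, Finset.mem_inter, hG₂, Finset.mem_erase]
            constructor
            · rintro (rfl | ⟨hxA, hxne, hxG⟩)
              · exact ⟨Or.inl rfl, hb₀G⟩
              · exact ⟨Or.inr ⟨hxA, hxG⟩, hxG⟩
            · rintro ⟨rfl | ⟨hxA, hxG⟩, hxG'⟩
              · exact Or.inl rfl
              · by_cases hx : x = b₀
                · exact Or.inl hx
                · exact Or.inr ⟨hxA, hx, hxG⟩
          have e2 : insert b₀ A ∩ G = insert b₀ (A ∩ G) ∩ G := by
            ext x
            simp only [Finset.mem_insert, Finset.mem_inter]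
            constructor
            · rintro ⟨rfl | hxA, hxG⟩
              · exact ⟨Or.inl rfl, hxG⟩
              · exact ⟨Or.inr ⟨hxA, hxG⟩, hxG⟩
            · rintro ⟨rfl | ⟨hxA, hxG⟩, hxG'⟩
              · exact ⟨Or.inl rfl, hxG'⟩
              · exact ⟨Or.inr hxA, hxG⟩
          rw [e1, hloop (insert b₀ A), e2]
        · rw [con_rk, hinsB₂, hKB, hb1, hB₂card]
        · rw [con_rk, Finset.insert_eq_self.2 (Finset.mem_univ b₀), hKU, hb1, hB₂card]
      obtain ⟨hm1, hloopM₂, hBM₂, hUM₂⟩ := gen M hloopM hBM hUM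
      obtain ⟨hn1, hloopN₂, hBN₂, hUN₂⟩ := gen N hloopN hBN hUN
      have hH₂ : ∀ e ∈ G₂, e ∉ B₂ → ∀ b ∈ B₂,
          ((M.con b₀).rk (insert e (B₂.erase b)) = (B₂.card : ℤ) ↔
            (N.con b₀).rk (insert e (B₂.erase b)) = (B₂.card : ℤ)) := by
        intro e heG₂ heB₂ b hb
        have heb₀ : e ≠ b₀ := (Finset.mem_erase.1 heG₂).1
        have heB : e ∉ B := fun h => heB₂ (Finset.mem_erase.2 ⟨heb₀, h⟩)
        have hbB : b ∈ B := (Finset.mem_erase.1 hb).2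
        have hbb₀ : b ≠ b₀ := (Finset.mem_erase.1 hb).1
        have eset : insert b₀ (insert e (B₂.erase b)) = insert e (B.erase b) := by
          ext x
          simp only [Finset.mem_insert, Finset.mem_erase, hB₂]
          constructor
          · rintro (rfl | rfl | ⟨hx1, hx2, hx3⟩)
            · exact Or.inr ⟨fun h => hbb₀ h.symm, hb₀⟩
            · exact Or.inl rfl
            · exact Or.inr ⟨hx1, hx3⟩
          · rintro (rfl | ⟨hx1, hx2⟩)
            · exact Or.inr (Or.inl rfl)
            · by_cases hx : x = b₀
              · exact Or.inl hx
              · exact Or.inr (Or.inr ⟨hx1, hx, hx2⟩)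
        rw [con_rk, con_rk, eset, hm1, hn1, hB₂card]
        have := hH e (Finset.mem_of_mem_erase heG₂) heB b hbB
        omega
      by_cases hdis₂ : ∃ S, (M.con b₀).rk S ≠ (N.con b₀).rk S
      · exfalso
        have hcard : G₂.card ≤ n := by
          rw [hG₂, Finset.card_erase_of_mem hb₀G]
          have := Finset.card_pos.2 ⟨b₀, hb₀G⟩
          omega
        rcases ih G₂ hcard _ _ B₂ hB₂G₂ hloopM₂ hloopN₂ hBM₂ hBN₂ hUM₂ hUN₂ hH₂ hdis₂ with
          hM | hN
        · exact hconM (M.pat_con hM)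
        · exact hconN (N.pat_con hN)
      · push_neg at hdis₂
        intro S hb₀S
        have := hdis₂ (S.erase b₀)
        rw [con_rk, con_rk, Finset.insert_erase hb₀S, hm1, hn1] at this
        omega
    -- locate the disagreement at W
    obtain ⟨S₀, hS₀⟩ := hdis
    have hagree : ∀ S : Finset E, S ⊆ B ∪ W → S ≠ W → M.rk S = N.rk S := by
      intro S hSsub hSne
      by_cases hSB : ∃ b₀ ∈ B, b₀ ∈ S
      · obtain ⟨b₀, hb₀, hb₀S⟩ := hSB
        exact blockC b₀ hb₀ S hb₀S
      · push_neg at hSB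
        have hSW : S ⊆ W := by
          intro x hx
          rcases Finset.mem_union.1 (hSsub hx) with h | h
          · exact absurd hx (by intro hc; exact (hSB x h) hc)
          · exact h
        obtain ⟨e₀, he₀W, he₀S⟩ :=
          Finset.exists_of_ssubset (Finset.ssubset_iff_subset_ne.2 ⟨hSW, hSne⟩)
        have he₀G : e₀ ∈ G := (Finset.mem_sdiff.1 he₀W).1
        have he₀B : e₀ ∉ B := (Finset.mem_sdiff.1 he₀W).2
        exact blockD e₀ he₀G he₀B S he₀S
    have hWdis : M.rk W ≠ N.rk W := by
      intro hWeq
      apply hS₀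
      by_cases hSB : ∃ b₀ ∈ B, b₀ ∈ S₀
      · obtain ⟨b₀, hb₀, hb₀S⟩ := hSB
        exact blockC b₀ hb₀ S₀ hb₀S
      · push_neg at hSB
        by_cases hSe : ∃ e₀ ∈ G, e₀ ∉ B ∧ e₀ ∉ S₀
        · obtain ⟨e₀, he₀G, he₀B, he₀S⟩ := hSe
          exact blockD e₀ he₀G he₀B S₀ he₀S
        · push_neg at hSe
          -- S₀ ∩ G = W
          have hSG : S₀ ∩ G = W := by
            ext x
            simp only [Finset.mem_inter, hW, Finset.mem_sdiff]
            constructor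
            · rintro ⟨hxS, hxG⟩
              exact ⟨hxG, fun hxB => hSB x hxB hxS⟩
            · rintro ⟨hxG, hxB⟩
              exact ⟨hSe x hxG hxB, hxG⟩
          rw [hloopM S₀, hloopN S₀, hSG, hWeq]
    have hWne : W.Nonempty := by
      rw [Finset.nonempty_iff_ne_empty]
      intro h
      rw [h, M.rk_empty, N.rk_empty] at hWdis
      exact hWdis rfl
    have hdisjBW : ∀ b ∈ B, b ∉ W := by
      intro b hb hbW
      exact (Finset.mem_sdiff.1 hbW).2 hb
    have hHW : ∀ e ∈ W, e ∈ G ∧ e ∉ B := by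
      intro e he
      exact ⟨(Finset.mem_sdiff.1 he).1, (Finset.mem_sdiff.1 he).2⟩
    rcases lt_or_gt_of_ne hWdis with hlt | hgt
    · -- N.rk W > M.rk W : pattern in N
      apply hconN
      apply endgame N M B W hdisjBW
        (fun S h1 h2 => (hagree S h1 h2).symm) hlt hBN hUN hUM hWne
      intro e he b hb
      exact (hH e (hHW e he).1 (hHW e he).2 b hb).symm
    · -- M.rk W > N.rk W : pattern in M
      apply hconM
      apply endgame M N B W hdisjBW hagree hgt hBM hUM hUN hWne
      intro e he b hb
      exact hH e (hHW e he).1 (hHW e he).2 b hb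


open Module Submodule

/-- The vector matroid of a family of vectors. -/
noncomputable def vec (F : Type) {V : Type} [Field F] [AddCommGroup V] [Module F V]
    [FiniteDimensional F V] (φ : E → V) : RkMatroid E := by
  classical
  exact
  { rk := fun S => (Module.finrank F (Submodule.span F (φ '' (S : Set E))) : ℤ)
    rk_nonneg := fun S => by positivity
    rk_le_card := fun S => by
      have h1 : Set.finrank F ((S.image φ : Finset V) : Set V) ≤ (S.image φ).card :=
        finrank_span_finset_le_card (S.image φ)
      rw [Finset.coe_image] at h1
      have h2 : (S.image φ).card ≤ S.card := Finset.card_image_le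
      unfold Set.finrank at h1
      exact_mod_cast le_trans h1 h2
    rk_mono := fun X Y h => by
      have : Submodule.span F (φ '' (X : Set E)) ≤ Submodule.span F (φ '' (Y : Set E)) :=
        Submodule.span_mono (Set.image_mono (by exact_mod_cast h))
      exact_mod_cast Submodule.finrank_mono this
    rk_submod := fun X Y => by
      have e1 : Submodule.span F (φ '' ((X ∪ Y : Finset E) : Set E)) =
          Submodule.span F (φ '' (X : Set E)) ⊔ Submodule.span F (φ '' (Y : Set E)) := by
        rw [Finset.coe_union, Set.image_union, Submodule.span_union]
      have e2 : Submodule.span F (φ '' ((X ∩ Y : Finset E) : Set E)) ≤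
          Submodule.span F (φ '' (X : Set E)) ⊓ Submodule.span F (φ '' (Y : Set E)) := by
        rw [Finset.coe_inter]
        refine le_inf ?_ ?_ <;> apply Submodule.span_mono <;> apply Set.image_mono
        · exact Set.inter_subset_left
        · exact Set.inter_subset_right
      have h3 := Submodule.finrank_sup_add_finrank_inf_eq
        (Submodule.span F (φ '' (X : Set E))) (Submodule.span F (φ '' (Y : Set E)))
      have h4 : Module.finrank F (Submodule.span F (φ '' ((X ∩ Y : Finset E) : Set E))) ≤
          Module.finrank F ((Submodule.span F (φ '' (X : Set E)) ⊓
            Submodule.span F (φ '' (Y : Set E)) : Submodule F V)) := Submodule.finrank_mono e2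
      rw [e1]
      push_cast
      omega }

lemma vec_rk {F V : Type} [Field F] [AddCommGroup V] [Module F V]
    [FiniteDimensional F V] (φ : E → V) (S : Finset E) :
    (vec F φ).rk S = (Module.finrank F (Submodule.span F (φ '' (S : Set E))) : ℤ) := rfl

lemma vec_indep_iff {F V : Type} [Field F] [AddCommGroup V] [Module F V]
    [FiniteDimensional F V] (φ : E → V) (I : Finset E) :
    (vec F φ).rk I = (I.card : ℤ) ↔
      LinearIndependent F (fun i : {x // x ∈ I} => φ (i : E)) := by
  rw [linearIndependent_iff_card_eq_finrank_span]
  have e1 : Set.range (fun i : {x // x ∈ I} => φ (i : E)) = φ '' (I : Set E) := by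
    ext v
    constructor
    · rintro ⟨⟨x, hx⟩, rfl⟩
      exact ⟨x, hx, rfl⟩
    · rintro ⟨x, hx, rfl⟩
      exact ⟨⟨x, hx⟩, rfl⟩
  rw [e1, vec_rk]
  have e2 : Fintype.card {x // x ∈ I} = I.card := Fintype.card_coe I
  rw [e2]
  unfold Set.finrank
  show ((Module.finrank F (Submodule.span F (φ '' (I : Set E)))) : ℤ) = (I.card : ℤ) ↔ _
  constructor
  · intro h; exact_mod_cast h.symm
  · intro h; exact_mod_cast h.symm


lemma vec_rk_le {F V : Type} [Field F] [AddCommGroup V] [Module F V]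
    [FiniteDimensional F V] (φ : E → V) (S : Finset E) :
    (vec F φ).rk S ≤ (Module.finrank F V : ℤ) := by
  rw [vec_rk]
  exact_mod_cast Submodule.finrank_le _

theorem hard_direction [Fintype E] (M : RkMatroid E) (hno : ¬ RHSPred M.rk) :
    RepresentableRk (ZMod 2) M.rk := by
  classical
  obtain ⟨B, hBuniv, hBind, hBcard⟩ := M.exists_basis Finset.univ
  set φ : E → ({x // x ∈ B} → ZMod 2) :=
    fun e c => if M.rk (insert e (B.erase ↑c)) = (B.card : ℤ) then 1 else 0 with hφ
  set N : RkMatroid E := vec (ZMod 2) φ with hNdef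
  have hNind : ∀ I : Finset E, N.rk I = (I.card : ℤ) ↔
      LinearIndependent (ZMod 2) (fun i : {x // x ∈ I} => φ (i : E)) :=
    fun I => vec_indep_iff φ I
  -- φ on basis elements is the standard basis
  have phiB : ∀ (x : E) (hx : x ∈ B) (c : {y // y ∈ B}),
      φ x c = if x = (c : E) then 1 else 0 := by
    intro x hx c
    by_cases hxc : x = (c : E)
    · rw [if_pos hxc]
      have : insert x (B.erase (c : E)) = B := by
        rw [hxc]
        exact Finset.insert_erase c.2
      simp only [hφ, this, hBind, if_pos]
    · rw [if_neg hxc]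
      have hxe : x ∈ B.erase (c : E) := Finset.mem_erase.2 ⟨hxc, hx⟩
      have hset : insert x (B.erase (c : E)) = B.erase (c : E) := Finset.insert_eq_self.2 hxe
      have hrk : M.rk (B.erase (c : E)) = ((B.erase (c : E)).card : ℤ) :=
        M.indep_subset hBind (Finset.erase_subset _ _)
      have hcard : (B.erase (c : E)).card = B.card - 1 := Finset.card_erase_of_mem c.2
      have hpos : 0 < B.card := Finset.card_pos.2 ⟨x, hx⟩
      have hne : M.rk (insert x (B.erase (c : E))) ≠ (B.card : ℤ) := by
        rw [hset, hrk, hcard]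
        have : ((B.card - 1 : ℕ) : ℤ) = (B.card : ℤ) - 1 := by
          push_cast [Nat.cast_sub (by omega : 1 ≤ B.card)]
          ring
        rw [this]
        omega
      simp only [hφ, hne, if_neg, if_false]
  -- evaluation of sums over subsets of B
  have evalsum : ∀ (T : Finset E), T ⊆ B → ∀ (f : E → ZMod 2) (c : {y // y ∈ B}),
      (c : E) ∈ T → (∑ x ∈ T, f x • φ x) c = f (c : E) := by
    intro T hTB f c hcT
    rw [Finset.sum_apply]
    have hterm : ∀ x ∈ T, (f x • φ x) c = if x = (c : E) then f x else 0 := by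
      intro x hx
      rw [Pi.smul_apply, phiB x (hTB hx) c]
      by_cases h : x = (c : E) <;> simp [h]
    rw [Finset.sum_congr rfl hterm, Finset.sum_ite_eq' T ((c : E)) f, if_pos hcT]
  have evalzero : ∀ (T : Finset E), T ⊆ B → ∀ (f : E → ZMod 2) (c : {y // y ∈ B}),
      (c : E) ∉ T → (∑ x ∈ T, f x • φ x) c = 0 := by
    intro T hTB f c hcT
    rw [Finset.sum_apply]
    have hterm : ∀ x ∈ T, (f x • φ x) c = if x = (c : E) then f x else 0 := by
      intro x hx
      rw [Pi.smul_apply, phiB x (hTB hx) c]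
      by_cases h : x = (c : E) <;> simp [h]
    rw [Finset.sum_congr rfl hterm, Finset.sum_ite_eq' T ((c : E)) f, if_neg hcT]
  -- N-rank of B
  have hNB : N.rk B = (B.card : ℤ) := by
    rw [hNind, li_iff]
    intro f hsum x hx
    have h0 := congrFun hsum ⟨x, hx⟩
    rw [evalsum B (subset_refl B) f ⟨x, hx⟩ hx] at h0
    exact h0
  -- N-rank of univ
  have hNU : N.rk Finset.univ = (B.card : ℤ) := by
    have h1 : N.rk B ≤ N.rk Finset.univ := N.rk_mono (Finset.subset_univ B)
    have h2 : N.rk Finset.univ ≤ (Module.finrank (ZMod 2) ({x // x ∈ B} → ZMod 2) : ℤ) :=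
      vec_rk_le φ Finset.univ
    have h3 : Module.finrank (ZMod 2) ({x // x ∈ B} → ZMod 2) = B.card := by
      rw [Module.finrank_pi]
      exact Fintype.card_coe B
    rw [h3] at h2
    omega
  -- H condition
  have hHcond : ∀ e ∈ (Finset.univ : Finset E), e ∉ B → ∀ b ∈ B,
      (M.rk (insert e (B.erase b)) = (B.card : ℤ) ↔
        N.rk (insert e (B.erase b)) = (B.card : ℤ)) := by
    intro e _ heB b hb
    have heD : e ∉ B.erase b := fun h => heB (Finset.mem_of_mem_erase h)
    have hpos : 0 < B.card := Finset.card_pos.2 ⟨b, hb⟩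
    have hDcard : ((insert e (B.erase b)).card : ℤ) = (B.card : ℤ) := by
      rw [Finset.card_insert_of_notMem heD, Finset.card_erase_of_mem hb]
      have : B.card - 1 + 1 = B.card := by omega
      rw [this]
    constructor
    · intro hM
      have hφe : φ e ⟨b, hb⟩ = 1 := by
        simp only [hφ]
        exact if_pos hM
      rw [← hDcard, hNind, li_iff]
      intro f hsum
      rw [Finset.sum_insert heD] at hsum
      -- first conclude f e = 0 by evaluating at coordinate b
      have hfe : f e = 0 := by
        have h0 := congrFun hsum ⟨b, hb⟩
        rw [Pi.add_apply, Pi.smul_apply, hφe,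
          evalzero (B.erase b) (Finset.erase_subset _ _) f ⟨b, hb⟩
            (Finset.notMem_erase b B), Pi.zero_apply, add_zero, smul_eq_mul, mul_one] at h0
        exact h0
      have hrest : ∑ x ∈ B.erase b, f x • φ x = 0 := by
        rw [hfe, zero_smul, zero_add] at hsum
        exact hsum
      intro x hx
      rcases Finset.mem_insert.1 hx with rfl | hxe
      · exact hfe
      · have hxB : x ∈ B := Finset.mem_of_mem_erase hxe
        have h0 := congrFun hrest ⟨x, hxB⟩
        rw [evalsum (B.erase b) (Finset.erase_subset _ _) f ⟨x, hxB⟩ hxe] at h0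
        exact h0
    · intro hNval
      by_contra hM
      have hφe0 : φ e ⟨b, hb⟩ = 0 := by
        simp only [hφ]
        exact if_neg hM
      set f : E → ZMod 2 :=
        fun x => if x = e then 1 else (if hx : x ∈ B then φ e ⟨x, hx⟩ else 0) with hf
      have hfeB : ∀ (x : E) (hx : x ∈ B.erase b),
          f x = φ e ⟨x, Finset.mem_of_mem_erase hx⟩ := by
        intro x hx
        have hxB : x ∈ B := Finset.mem_of_mem_erase hx
        have hxe : x ≠ e := fun h => heB (h ▸ hxB)
        simp only [hf, hxe, if_false, hxB, dif_pos]
      have hsum : ∑ x ∈ insert e (B.erase b), f x • φ x = 0 := by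
        rw [Finset.sum_insert heD]
        funext c
        have hfe1 : f e = 1 := by simp [hf]
        rw [Pi.add_apply, Pi.smul_apply, hfe1, one_smul, Finset.sum_apply, Pi.zero_apply]
        have hterm : ∀ x ∈ B.erase b, (f x • φ x) c = if x = (c : E) then φ e c else 0 := by
          intro x hx
          have hxB : x ∈ B := Finset.mem_of_mem_erase hx
          rw [Pi.smul_apply, phiB x hxB c]
          by_cases h : x = (c : E)
          · rw [if_pos h, if_pos h, smul_eq_mul, mul_one, hfeB x hx]
            congr 1
            exact Subtype.ext h
          · rw [if_neg h, if_neg h, smul_eq_mul, mul_zero]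
        rw [Finset.sum_congr rfl hterm, Finset.sum_ite_eq' (B.erase b) ((c : E)) (fun _ => φ e c)]
        by_cases hcb : (c : E) = b
        · have hc : c = ⟨b, hb⟩ := Subtype.ext hcb
          rw [if_neg (by rw [hcb]; exact Finset.notMem_erase b B), hc, hφe0, add_zero]
        · rw [if_pos (Finset.mem_erase.2 ⟨hcb, c.2⟩)]
          have : ∀ z : ZMod 2, z + z = 0 := by decide
          exact this _
      have hNne : N.rk (insert e (B.erase b)) ≠ ((insert e (B.erase b)).card : ℤ) := by
        intro hcontra
        have hLI := (li_iff φ (insert e (B.erase b))).1 ((hNind _).1 hcontra)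
        have := hLI f hsum e (Finset.mem_insert_self _ _)
        rw [hf] at this
        simp at this
      rw [hDcard] at hNne
      exact hNne hNval
  -- apply the key lemma
  by_cases hMN : ∃ S, M.rk S ≠ N.rk S
  · exfalso
    have hMuniv : M.rk Finset.univ = (B.card : ℤ) := hBcard.symm
    have hloopM : ∀ A : Finset E, M.rk A = M.rk (A ∩ Finset.univ) := by
      intro A; rw [Finset.inter_univ]
    have hloopN : ∀ A : Finset E, N.rk A = N.rk (A ∩ Finset.univ) := by
      intro A; rw [Finset.inter_univ]
    rcases key (Finset.univ : Finset E).card Finset.univ (le_refl _) M N B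
      (Finset.subset_univ B) hloopM hloopN hBind hNB hMuniv hNU hHcond hMN with hPM | hPN
    · exact hno (pat_rhs hPM)
    · have hrepN : RepresentableRk (ZMod 2) N.rk :=
        ⟨({x // x ∈ B} → ZMod 2), inferInstance, inferInstance, φ, hNind⟩
      exact (N.easy_direction hrepN) (pat_rhs hPN)
  · push_neg at hMN
    refine ⟨({x // x ∈ B} → ZMod 2), inferInstance, inferInstance, φ, fun I => ?_⟩
    rw [hMN I]
    exact hNind I


end RkMatroid

/-- Tutte: A finite matroid `M = (ρ, E)` is linearly representable over
`F_2` if and only if there are no sets `X ⊆ Y ⊆ E` such that the minor `M|Y/X` (with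
rank function `A ↦ ρ(A ∪ X) - ρ(X)` on subsets of `Y - X`) is isomorphic to the uniform
matroid `U_4^2`. -/
theorem stmt_5 {E : Type} [Fintype E] [DecidableEq E] (M : RkMatroid E) :
    RepresentableRk (ZMod 2) M.rk ↔
    ¬ ∃ (X Y : Finset E), X ⊆ Y ∧ ∃ ψ : {a // a ∈ Y \ X} ≃ Fin 4,
        ∀ A : Finset {a // a ∈ Y \ X},
          M.rk (A.image Subtype.val ∪ X) - M.rk X =
            min ((A.map ψ.toEmbedding).card : ℤ) (2 : ℤ) := by
  constructor
  · intro h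
    exact M.easy_direction h
  · intro h
    exact M.hard_direction h
end

section
/- Let C be a linear code over F^E for a field F and finite set E, and let X ⊆ E be nonempty. Then the punctured code C|X is a non-degenerate storage code (i.e., its minimum Hamming distance is at least 2 and no coordinate of C|X is identically zero) if and only if, in the restricted matroid M_C|X, the top cyclic flat equals X and the bottom cyclic flat equals ∅; equivalently, if and only if ρ_C({x}) = 1 for every x ∈ X and ρ_C(X − x) = ρ_C(X) for every x ∈ X. -/
lemma aux_finrank_map_eq_iff {F V W : Type*} [Field F] [AddCommGroup V] [Module F V]
    [AddCommGroup W] [Module F W] [FiniteDimensional F V]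
    (p : Submodule F V) (φ : V →ₗ[F] W) :
    Module.finrank F (p.map φ) = Module.finrank F p ↔ ∀ v ∈ p, φ v = 0 → v = 0 := by
  have h := LinearMap.finrank_range_add_finrank_ker (φ.domRestrict p)
  rw [LinearMap.range_domRestrict] at h
  have hker : (LinearMap.ker (φ.domRestrict p) = ⊥) ↔ ∀ v ∈ p, φ v = 0 → v = 0 := by
    rw [Submodule.eq_bot_iff]
    constructor
    · intro H v hv hφ
      have := H ⟨v, hv⟩ (by simpa [LinearMap.domRestrict] using hφ)
      simpa using congrArg Subtype.val this
    · intro H y hy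
      ext
      exact H y.1 y.2 (by simpa [LinearMap.domRestrict] using hy)
  constructor
  · intro he
    exact hker.mp (Submodule.finrank_eq_zero.mp (by omega))
  · intro H
    rw [hker.mpr H] at h
    simpa using h

lemma aux_rho_single {F E : Type} [Field F] [Fintype E] [DecidableEq E]
    (C : Submodule F (E → F)) (ρ : Finset E → ℕ)
    (hρ : ∀ Y : Finset E,
      ρ Y = Module.finrank F
        (C.map (LinearMap.funLeft F F (fun a : {x // x ∈ Y} => (a : E))))) (x : E) :
    (ρ {x} = 1 ↔ ∃ c ∈ C, c x ≠ 0) := by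
  classical
  set f := LinearMap.funLeft F F (fun a : {y // y ∈ ({x} : Finset E)} => (a : E)) with hf
  have hle : ρ {x} ≤ 1 := by
    rw [hρ]
    have := Submodule.finrank_le (C.map f)
    simpa [Module.finrank_pi] using this
  have h0 : ρ {x} = 0 ↔ ∀ c ∈ C, c x = 0 := by
    rw [hρ, Submodule.finrank_eq_zero, Submodule.eq_bot_iff]
    constructor
    · intro H c hc
      have := H (f c) ⟨c, hc, rfl⟩
      have := congrFun this ⟨x, by simp⟩
      simpa [f] using this
    · intro H v hv
      obtain ⟨c, hc, rfl⟩ := hv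
      funext a
      have hax : (a : E) = x := Finset.mem_singleton.mp a.2
      simp [f, hax, H c hc]
  constructor
  · intro h1
    by_contra H
    push_neg at H
    have : ρ {x} = 0 := h0.mpr (by intro c hc; by_contra h'; exact h' (H c hc)) |>.symm ▸ rfl
    omega
  · intro ⟨c, hc, hcx⟩
    have : ρ {x} ≠ 0 := by
      intro h'
      exact hcx (h0.mp h' c hc)
    omega

lemma aux_rho_erase {F E : Type} [Field F] [Fintype E] [DecidableEq E]
    (C : Submodule F (E → F)) (ρ : Finset E → ℕ)
    (hρ : ∀ Y : Finset E,
      ρ Y = Module.finrank F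
        (C.map (LinearMap.funLeft F F (fun a : {x // x ∈ Y} => (a : E)))))
    (X : Finset E) (x : E) (hx : x ∈ X) :
    (ρ (X.erase x) = ρ X ↔ ∀ c ∈ C, (∀ y ∈ X.erase x, c y = 0) → c x = 0) := by
  classical
  set fX := LinearMap.funLeft F F (fun a : {y // y ∈ X} => (a : E)) with hfX
  set fe := LinearMap.funLeft F F (fun a : {y // y ∈ X.erase x} => (a : E)) with hfe
  set φ : ({y // y ∈ X} → F) →ₗ[F] ({y // y ∈ X.erase x} → F) :=
    LinearMap.funLeft F F (fun a : {y // y ∈ X.erase x} =>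
      (⟨a.1, Finset.mem_of_mem_erase a.2⟩ : {y // y ∈ X})) with hφ
  have hcomp : φ.comp fX = fe := by
    ext c a
    rfl
  have hmap : (C.map fX).map φ = C.map fe := by
    rw [← Submodule.map_comp, hcomp]
  rw [hρ (X.erase x), hρ X, ← hfX, ← hfe, ← hmap]
  rw [aux_finrank_map_eq_iff]
  constructor
  · intro H c hc hz
    have hv : fX c ∈ C.map fX := ⟨c, hc, rfl⟩
    have hφv : φ (fX c) = 0 := by
      funext a
      have : (a : E) ∈ X.erase x := a.2
      simpa [φ, fX, LinearMap.funLeft] using hz a.1 this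
    have := H (fX c) hv hφv
    have := congrFun this ⟨x, hx⟩
    simpa [fX] using this
  · intro H v hv hφv
    obtain ⟨c, hc, rfl⟩ := hv
    have hz : ∀ y ∈ X.erase x, c y = 0 := by
      intro y hy
      have := congrFun hφv ⟨y, hy⟩
      simpa [φ, fX] using this
    have hcx : c x = 0 := H c hc hz
    funext a
    rcases eq_or_ne (a : E) x with h | h
    · simpa [fX, h] using hcx
    · exact hz a.1 (Finset.mem_erase.mpr ⟨h, a.2⟩)

/-- Let `C` be a linear code in `F^E` and `X ⊆ E` nonempty.  The punctured
code `C|X` is a non-degenerate storage code (minimum Hamming distance at least `2` and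
no identically-zero coordinate) if and only if, in the restricted matroid `M_C|X`, the
top cyclic flat `cyc(X)` equals `X` and the bottom cyclic flat `cl(∅) ∩ X` equals `∅`;
equivalently, if and only if `ρ_C({x}) = 1` and `ρ_C(X - x) = ρ_C(X)` for every `x ∈ X`.
Here `ρ_C(Y) = dim (C|Y)` is the rank function of `M_C`. -/
theorem stmt_13 {F E : Type} [Field F] [DecidableEq F] [Fintype E] [DecidableEq E]
    (C : Submodule F (E → F)) (X : Finset E) (hX : X.Nonempty)
    (ρ : Finset E → ℕ)
    (hρ : ∀ Y : Finset E,
      ρ Y = Module.finrank F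
        (C.map (LinearMap.funLeft F F (fun a : {x // x ∈ Y} => (a : E))))) :
    ((∀ c ∈ C, (∃ x ∈ X, c x ≠ 0) → 2 ≤ (X.filter fun x => c x ≠ 0).card) ∧
        (∀ x ∈ X, ∃ c ∈ C, c x ≠ 0) ↔
      (X.filter fun e => ρ (X.erase e) = ρ X) = X ∧
        (X.filter fun e => ρ {e} = 0) = ∅) ∧
    ((∀ c ∈ C, (∃ x ∈ X, c x ≠ 0) → 2 ≤ (X.filter fun x => c x ≠ 0).card) ∧
        (∀ x ∈ X, ∃ c ∈ C, c x ≠ 0) ↔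
      (∀ x ∈ X, ρ {x} = 1) ∧ ∀ x ∈ X, ρ (X.erase x) = ρ X) := by
  classical
  -- A ↔ P1
  have hA : (∀ c ∈ C, (∃ x ∈ X, c x ≠ 0) → 2 ≤ (X.filter fun x => c x ≠ 0).card) ↔
      ∀ x ∈ X, ρ (X.erase x) = ρ X := by
    constructor
    · intro hA x hx
      rw [aux_rho_erase C ρ hρ X x hx]
      intro c hc hz
      by_contra hcx
      have h2 := hA c hc ⟨x, hx, hcx⟩
      have hsub : (X.filter fun y => c y ≠ 0) ⊆ {x} := by
        intro y hy
        rw [Finset.mem_filter] at hy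
        rcases eq_or_ne y x with h | h
        · simp [h]
        · exact absurd (hz y (Finset.mem_erase.mpr ⟨h, hy.1⟩)) hy.2
      have := Finset.card_le_card hsub
      simp only [Finset.card_singleton] at this
      omega
    · intro hP c hc ⟨x, hx, hcx⟩
      have hcond := (aux_rho_erase C ρ hρ X x hx).mp (hP x hx)
      have : ∃ y ∈ X.erase x, c y ≠ 0 := by
        by_contra h
        push_neg at h
        exact hcx (hcond c hc h)
      obtain ⟨y, hy, hcy⟩ := this
      rw [Finset.mem_erase] at hy
      have h1 : x ∈ X.filter fun z => c z ≠ 0 := Finset.mem_filter.mpr ⟨hx, hcx⟩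
      have h2 : y ∈ X.filter fun z => c z ≠ 0 := Finset.mem_filter.mpr ⟨hy.2, hcy⟩
      exact Finset.one_lt_card.mpr ⟨x, h1, y, h2, fun h => hy.1 h.symm⟩
  -- B ↔ P2
  have hB : (∀ x ∈ X, ∃ c ∈ C, c x ≠ 0) ↔ ∀ x ∈ X, ρ {x} = 1 := by
    constructor
    · intro h x hx
      exact (aux_rho_single C ρ hρ x).mpr (h x hx)
    · intro h x hx
      exact (aux_rho_single C ρ hρ x).mp (h x hx)
  have hle1 : ∀ x : E, ρ {x} ≤ 1 := by
    intro x
    rw [hρ]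
    have := Submodule.finrank_le
      (C.map (LinearMap.funLeft F F (fun a : {y // y ∈ ({x} : Finset E)} => (a : E))))
    simpa [Module.finrank_pi] using this
  constructor
  · rw [Finset.filter_eq_self, Finset.filter_eq_empty_iff]
    constructor
    · rintro ⟨h1, h2⟩
      refine ⟨hA.mp h1, ?_⟩
      intro x hx h0
      have := hB.mp h2 x hx
      omega
    · rintro ⟨h1, h2⟩
      refine ⟨hA.mpr h1, hB.mpr ?_⟩
      intro x hx
      have := h2 hx
      have := hle1 x
      omega
  · rw [hA, hB]
    tauto
end
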